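/- arXiv:1411.6131 — 7 statements merged into one kernel-verified Lean document; each statement's English description precedes it below -/
import Mathlib

section
/- The function λ₊(x) = −(α + nx)/2 + (1/2)√((nx+α)² + 4αx) is strictly increasing on (0, ∞), and λ₊(x) → α/n as x → ∞. -/
/-!
Rationalizing the numerator and dividing by `x` gives
`λ₊(x) = 2α / D(1/x)` with `D(t) = √((n + αt)² + 4αt) + (n + αt)`.
`D` is strictly increasing on `[0, ∞)` and continuous with `D(0) = 2n`, so `λ₊` increases
as `1/x` decreases, and tends to `2α / (2n)`.
-/

open Filter Topology

namespace LambdaPlus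

/-- The `D` of the header. -/
noncomputable def denom (α n t : ℝ) : ℝ := √((n + α * t) ^ 2 + 4 * α * t) + (n + α * t)

variable {α n : ℝ}

lemma denom_pos (hα : 0 < α) (hn : 0 < n) {t : ℝ} (ht : 0 ≤ t) : 0 < denom α n t :=
  add_pos_of_nonneg_of_pos (Real.sqrt_nonneg _) (by positivity)

lemma strictMonoOn_denom (hα : 0 < α) (hn : 0 ≤ n) : StrictMonoOn (denom α n) (Set.Ici 0) := by
  intro s (hs : 0 ≤ s) t _ hst
  have hlin : n + α * s < n + α * t := by gcongr
  have hsqrt : √((n + α * s) ^ 2 + 4 * α * s) ≤ √((n + α * t) ^ 2 + 4 * α * t) := by gcongr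
  exact add_lt_add_of_le_of_lt hsqrt hlin

lemma continuous_denom (α n : ℝ) : Continuous (denom α n) := by
  unfold denom
  fun_prop

lemma denom_zero (hn : 0 ≤ n) : denom α n 0 = 2 * n := by
  simp [denom, Real.sqrt_sq hn, two_mul]

lemma eq_div_denom_inv (hα : 0 < α) (hn : 0 < n) {x : ℝ} (hx : 0 < x) :
    -(α + n * x) / 2 + (1 / 2) * √((n * x + α) ^ 2 + 4 * α * x) = 2 * α / denom α n x⁻¹ := by
  set t := x⁻¹
  set s := √((n + α * t) ^ 2 + 4 * α * t)
  have hxt : x * t = 1 := mul_inv_cancel₀ hx.ne'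
  have hs_sq : s ^ 2 = (n + α * t) ^ 2 + 4 * α * t := Real.sq_sqrt (by positivity)
  have hsqrt : √((n * x + α) ^ 2 + 4 * α * x) = x * s := by
    have hsq : (n * x + α) ^ 2 + 4 * α * x = (x * s) ^ 2 := by
      rw [mul_pow, hs_sq]
      linear_combination -(α * (2 * n * x + α + α * x * t) + 4 * α * x) * hxt
    rw [hsq, Real.sqrt_sq (mul_nonneg hx.le (Real.sqrt_nonneg _))]
  have hD := denom_pos hα hn (inv_nonneg.mpr hx.le)
  rw [hsqrt, eq_div_iff hD.ne', denom]
  linear_combination (x / 2) * hs_sq + (2 * α + α * (s + (n + α * t)) / 2) * hxt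

end LambdaPlus

open LambdaPlus in
/-- λ₊ is strictly increasing on (0,∞) and λ₊(x) → α/n as x → ∞. -/
theorem stmt_6 (α n : ℝ) (hα : 0 < α) (hn : 0 < n) :
    StrictMonoOn
        (fun x : ℝ => -(α + n * x) / 2 + (1 / 2) * Real.sqrt ((n * x + α) ^ 2 + 4 * α * x))
        (Set.Ioi 0) ∧
    Filter.Tendsto
        (fun x : ℝ => -(α + n * x) / 2 + (1 / 2) * Real.sqrt ((n * x + α) ^ 2 + 4 * α * x))
        Filter.atTop (nhds (α / n)) := by
  constructor
  · intro x (hx : 0 < x) y (hy : 0 < y) hxy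
    have hy' : 0 ≤ y⁻¹ := inv_nonneg.mpr hy.le
    simp only [eq_div_denom_inv hα hn hx, eq_div_denom_inv hα hn hy]
    exact div_lt_div_of_pos_left (mul_pos two_pos hα) (denom_pos hα hn hy')
      (strictMonoOn_denom hα hn.le hy' (inv_nonneg.mpr hx.le) (inv_strictAntiOn hx hy hxy))
  · have hD : Tendsto (fun x : ℝ => denom α n x⁻¹) atTop (𝓝 (2 * n)) := by
      rw [← denom_zero hn.le]
      exact (continuous_denom α n).tendsto 0 |>.comp tendsto_inv_atTop_zero
    have hlim := (tendsto_const_nhds (x := 2 * α)).div hD (mul_pos two_pos hn).ne'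
    rw [mul_div_mul_left _ _ two_ne_zero] at hlim
    refine hlim.congr' ?_
    filter_upwards [eventually_gt_atTop 0] with x hx
    exact (eq_div_denom_inv hα hn hx).symm
end

section
/- If (ū, θ̄) is a smooth solution on [0,1]×[0,∞) of the linearized system ū_t = σ_s(t)(n ū_{xx} − α θ̄_{xx}), θ̄_t − κ θ̄_{xx} = σ_s(t)((n+1)ū − α θ̄), with Neumann boundary conditions ū_x = θ̄_x = 0 at x = 0, 1, with κ > 0, with σ_s(t) = 1/(αt + c₀), and with ∫₀¹ ū(x,t) dx = 0 for all t, then there exist constants A > 0 and T > 0 such that the energy E(t) = ∫₀¹ ((A/2)ū² + (1/2)θ̄²) dx is nonincreasing on [T, ∞) and E(t) → 0 as t → ∞. -/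
noncomputable def pdx (f : ℝ × ℝ → ℝ) (p : ℝ × ℝ) : ℝ := fderiv ℝ f p (1,0)
noncomputable def pdt (f : ℝ × ℝ → ℝ) (p : ℝ × ℝ) : ℝ := fderiv ℝ f p (0,1)

theorem contDiff_pdx {f : ℝ × ℝ → ℝ} (hf : ContDiff ℝ (⊤ : ℕ∞) f) : ContDiff ℝ (⊤ : ℕ∞) (pdx f) :=
  (hf.fderiv_right (le_refl _)).clm_apply contDiff_const

theorem contDiff_pdt {f : ℝ × ℝ → ℝ} (hf : ContDiff ℝ (⊤ : ℕ∞) f) : ContDiff ℝ (⊤ : ℕ∞) (pdt f) :=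
  (hf.fderiv_right (le_refl _)).clm_apply contDiff_const

theorem hasDerivAt_pdx {f : ℝ × ℝ → ℝ} (hf : ContDiff ℝ (⊤ : ℕ∞) f) (x t : ℝ) :
    HasDerivAt (fun y => f (y, t)) (pdx f (x, t)) x := by
  have h1 : HasDerivAt (fun y : ℝ => (y, t)) ((1 : ℝ), (0 : ℝ)) x := by
    simpa using (hasDerivAt_id x).prodMk (hasDerivAt_const x t)
  exact ((hf.differentiable (by simp) (x, t)).hasFDerivAt).comp_hasDerivAt x h1

theorem hasDerivAt_pdt {f : ℝ × ℝ → ℝ} (hf : ContDiff ℝ (⊤ : ℕ∞) f) (x t : ℝ) :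
    HasDerivAt (fun s => f (x, s)) (pdt f (x, t)) t := by
  have h1 : HasDerivAt (fun s : ℝ => (x, s)) ((0 : ℝ), (1 : ℝ)) t := by
    simpa using (hasDerivAt_const t x).prodMk (hasDerivAt_id t)
  exact ((hf.differentiable (by simp) (x, t)).hasFDerivAt).comp_hasDerivAt t h1

section curried
variable {w : ℝ → ℝ → ℝ}

theorem chasx (hw : ContDiff ℝ (⊤ : ℕ∞) (fun p : ℝ × ℝ => w p.1 p.2)) (x t : ℝ) :
    HasDerivAt (fun y => w y t) (pdx (fun p : ℝ × ℝ => w p.1 p.2) (x, t)) x :=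
  hasDerivAt_pdx hw x t

theorem chast (hw : ContDiff ℝ (⊤ : ℕ∞) (fun p : ℝ × ℝ => w p.1 p.2)) (x t : ℝ) :
    HasDerivAt (fun s => w x s) (pdt (fun p : ℝ × ℝ => w p.1 p.2) (x, t)) t :=
  hasDerivAt_pdt hw x t

theorem chasxx (hw : ContDiff ℝ (⊤ : ℕ∞) (fun p : ℝ × ℝ => w p.1 p.2)) (x t : ℝ) :
    HasDerivAt (fun y => pdx (fun p : ℝ × ℝ => w p.1 p.2) (y, t))
      (pdx (pdx (fun p : ℝ × ℝ => w p.1 p.2)) (x, t)) x :=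
  hasDerivAt_pdx (contDiff_pdx hw) x t

theorem cderiv_t (hw : ContDiff ℝ (⊤ : ℕ∞) (fun p : ℝ × ℝ => w p.1 p.2)) (x t : ℝ) :
    deriv (fun s => w x s) t = pdt (fun p : ℝ × ℝ => w p.1 p.2) (x, t) :=
  (chast hw x t).deriv

theorem cderiv_x (hw : ContDiff ℝ (⊤ : ℕ∞) (fun p : ℝ × ℝ => w p.1 p.2)) (x t : ℝ) :
    deriv (fun y => w y t) x = pdx (fun p : ℝ × ℝ => w p.1 p.2) (x, t) :=
  (chasx hw x t).deriv

theorem cderiv_xx (hw : ContDiff ℝ (⊤ : ℕ∞) (fun p : ℝ × ℝ => w p.1 p.2)) (x t : ℝ) :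
    deriv (deriv (fun y => w y t)) x = pdx (pdx (fun p : ℝ × ℝ => w p.1 p.2)) (x, t) := by
  have h : deriv (fun y => w y t) = fun y => pdx (fun p : ℝ × ℝ => w p.1 p.2) (y, t) :=
    funext fun y => cderiv_x hw y t
  rw [h]
  exact (chasxx hw x t).deriv

theorem ccont_x (hw : ContDiff ℝ (⊤ : ℕ∞) (fun p : ℝ × ℝ => w p.1 p.2)) (t : ℝ) :
    Continuous (fun x => pdx (fun p : ℝ × ℝ => w p.1 p.2) (x, t)) :=
  (contDiff_pdx hw).continuous.comp (continuous_id.prodMk continuous_const)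

theorem ccont_xx (hw : ContDiff ℝ (⊤ : ℕ∞) (fun p : ℝ × ℝ => w p.1 p.2)) (t : ℝ) :
    Continuous (fun x => pdx (pdx (fun p : ℝ × ℝ => w p.1 p.2)) (x, t)) :=
  (contDiff_pdx (contDiff_pdx hw)).continuous.comp (continuous_id.prodMk continuous_const)

end curried

/-- Differentiation under the interval integral for smooth integrands. -/
theorem hasDerivAt_integral {f : ℝ × ℝ → ℝ} (hf : ContDiff ℝ (⊤ : ℕ∞) f) (t₀ : ℝ) :
    HasDerivAt (fun t => ∫ x in (0:ℝ)..1, f (x, t))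
      (∫ x in (0:ℝ)..1, pdt f (x, t₀)) t₀ := by
  have hcont : Continuous f := hf.continuous
  have hcont' : Continuous (pdt f) := (contDiff_pdt hf).continuous
  -- bound on compact set
  obtain ⟨M, hM⟩ : ∃ M, ∀ p ∈ (Set.Icc (0:ℝ) 1 ×ˢ Set.Icc (t₀ - 1) (t₀ + 1)),
      ‖pdt f p‖ ≤ M := by
    rcases (isCompact_Icc.prod isCompact_Icc).exists_bound_of_continuousOn
      (hcont'.continuousOn (s := Set.Icc (0:ℝ) 1 ×ˢ Set.Icc (t₀-1) (t₀+1))) with ⟨M, hM⟩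
    exact ⟨M, hM⟩
  have := (intervalIntegral.hasDerivAt_integral_of_dominated_loc_of_deriv_le
    (F := fun t x => f (x, t)) (F' := fun t x => pdt f (x, t)) (x₀ := t₀)
    (a := (0:ℝ)) (b := 1) (μ := MeasureTheory.volume) (bound := fun _ => M)
    (s := Metric.ball t₀ 1) (Metric.ball_mem_nhds t₀ one_pos)
    (Filter.Eventually.of_forall fun t =>
      ((hcont.comp (continuous_id.prodMk continuous_const)).aestronglyMeasurable))
    ((hcont.comp (continuous_id.prodMk continuous_const)).intervalIntegrable 0 1)
    ((hcont'.comp (continuous_id.prodMk continuous_const)).aestronglyMeasurable)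
    (Filter.Eventually.of_forall fun x hx t ht => by
      apply hM
      constructor
      · exact Set.mem_Icc.2 ⟨le_of_lt (Set.mem_Ioc.1 (by simpa using hx)).1,
          (Set.mem_Ioc.1 (by simpa using hx)).2⟩
      · have := Metric.mem_ball.1 ht
        rw [Real.dist_eq] at this
        constructor <;> [linarith [abs_lt.1 this |>.1]; linarith [abs_lt.1 this |>.2]])
    (intervalIntegrable_const)
    (Filter.Eventually.of_forall fun x hx t ht => hasDerivAt_pdt hf x t))
  exact this.2

theorem sq_integral_le {g : ℝ → ℝ} (hg : Continuous g) :
    (∫ x in (0:ℝ)..1, g x) ^ 2 ≤ ∫ x in (0:ℝ)..1, (g x) ^ 2 := by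
  set m := ∫ x in (0:ℝ)..1, g x with hm
  have h0 : 0 ≤ ∫ x in (0:ℝ)..1, (g x - m) ^ 2 :=
    intervalIntegral.integral_nonneg (by norm_num) (fun x _ => sq_nonneg _)
  have hrw : (fun x => (g x - m) ^ 2) = fun x => ((g x) ^ 2 - (2 * m) * g x) + m ^ 2 := by
    funext x; ring
  rw [hrw] at h0
  have hint1 : IntervalIntegrable (fun x => (g x) ^ 2) MeasureTheory.volume 0 1 :=
    (hg.pow 2).intervalIntegrable 0 1
  have hint2 : IntervalIntegrable (fun x => (2 * m) * g x) MeasureTheory.volume 0 1 :=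
    (continuous_const.mul hg).intervalIntegrable 0 1
  rw [intervalIntegral.integral_add (hint1.sub hint2) intervalIntegrable_const,
    intervalIntegral.integral_sub hint1 hint2, intervalIntegral.integral_const_mul,
    intervalIntegral.integral_const] at h0
  simp only [← hm, smul_eq_mul] at h0
  nlinarith [h0]

theorem poincare {f f' : ℝ → ℝ} (hd : ∀ x, HasDerivAt f (f' x) x) (hc : Continuous f')
    (hmean : ∫ x in (0:ℝ)..1, f x = 0) :
    ∫ x in (0:ℝ)..1, (f x) ^ 2 ≤ ∫ x in (0:ℝ)..1, (f' x) ^ 2 := by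
  have hcf : Continuous f := Differentiable.continuous (fun x => (hd x).differentiableAt)
  set C := ∫ y in (0:ℝ)..1, |f' y| with hC
  have hC0 : 0 ≤ C := intervalIntegral.integral_nonneg (by norm_num) (fun x _ => abs_nonneg _)
  have hdiff : ∀ x ∈ Set.Icc (0:ℝ) 1, ∀ y ∈ Set.Icc (0:ℝ) 1, |f x - f y| ≤ C := by
    intro x hx y hy
    have hftc : ∫ s in y..x, f' s = f x - f y :=
      intervalIntegral.integral_eq_sub_of_hasDerivAt (fun s _ => hd s)
        (hc.intervalIntegrable y x)
    rw [← hftc]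
    calc abs (∫ s in y..x, f' s) ≤ abs (∫ s in y..x, abs (f' s)) :=
          by simpa [Real.norm_eq_abs] using
            intervalIntegral.norm_integral_le_abs_integral_norm (f := f') (a := y) (b := x)
              (μ := MeasureTheory.volume)
      _ ≤ abs (∫ s in (0:ℝ)..1, abs (f' s)) := by
          apply intervalIntegral.abs_integral_mono_interval
          · rw [Set.uIoc_of_le (by norm_num : (0:ℝ) ≤ 1)]
            intro s hs
            rcases Set.mem_uIoc.1 hs with h | h
            · exact ⟨lt_of_le_of_lt hy.1 h.1, le_trans h.2 hx.2⟩
            · exact ⟨lt_of_le_of_lt hx.1 h.1, le_trans h.2 hy.2⟩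
          · exact Filter.Eventually.of_forall (fun s => abs_nonneg _)
          · exact (hc.abs).intervalIntegrable 0 1
      _ = C := abs_of_nonneg hC0
  -- |f x| ≤ C for x ∈ [0,1]
  have hfx : ∀ x ∈ Set.Icc (0:ℝ) 1, |f x| ≤ C := by
    intro x hx
    have h1 : f x = ∫ y in (0:ℝ)..1, (f x - f y) := by
      rw [intervalIntegral.integral_sub intervalIntegrable_const
        (hcf.intervalIntegrable 0 1), hmean, intervalIntegral.integral_const]
      simp
    rw [h1]
    have := intervalIntegral.norm_integral_le_of_norm_le_const
      (a := (0:ℝ)) (b := 1) (C := C) (f := fun y => f x - f y) ?_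
    · simpa using this
    · intro y hy
      apply hdiff x hx y
      rw [Set.uIoc_of_le (by norm_num : (0:ℝ) ≤ 1)] at hy
      exact ⟨le_of_lt hy.1, hy.2⟩
  -- conclude
  have hsq : ∀ x ∈ Set.Icc (0:ℝ) 1, (f x) ^ 2 ≤ ∫ y in (0:ℝ)..1, (f' y) ^ 2 := by
    intro x hx
    have h1 : (f x) ^ 2 ≤ C ^ 2 := by
      rw [← sq_abs (f x)]
      exact pow_le_pow_left₀ (abs_nonneg _) (hfx x hx) 2
    have h2 : C ^ 2 ≤ ∫ y in (0:ℝ)..1, (f' y) ^ 2 := by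
      have := sq_integral_le (g := fun y => |f' y|) hc.abs
      simpa [sq_abs] using this
    linarith
  calc ∫ x in (0:ℝ)..1, (f x) ^ 2
      ≤ ∫ _x in (0:ℝ)..1, (∫ y in (0:ℝ)..1, (f' y) ^ 2) := by
        apply intervalIntegral.integral_mono_on (by norm_num)
          ((hcf.pow 2).intervalIntegrable 0 1) intervalIntegrable_const
        exact hsq
    _ = ∫ y in (0:ℝ)..1, (f' y) ^ 2 := by simp

/-- ∫ g·h'' = -∫ g'·h' when h'(0)=h'(1)=0. -/
theorem ibp {g h1 g1 h2 : ℝ → ℝ}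
    (hg : ∀ x, HasDerivAt g (g1 x) x) (hh1 : ∀ x, HasDerivAt h1 (h2 x) x)
    (hcg1 : Continuous g1) (hch2 : Continuous h2)
    (hb0 : h1 0 = 0) (hb1 : h1 1 = 0) :
    ∫ x in (0:ℝ)..1, g x * h2 x = - ∫ x in (0:ℝ)..1, g1 x * h1 x := by
  rw [intervalIntegral.integral_mul_deriv_eq_deriv_mul (u := g) (v := h1) (u' := g1) (v' := h2)
    (fun x _ => hg x) (fun x _ => hh1 x) (hcg1.intervalIntegrable 0 1)
    (hch2.intervalIntegrable 0 1), hb0, hb1]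
  ring

set_option maxHeartbeats 2000000 in
/-- Core energy-derivative estimate at a fixed time. -/
theorem deriv_bound {α n κ A s : ℝ} (hα : 0 < α) (hn : 0 < n) (hκ : 0 < κ) (hs : 0 < s)
    {gu gu1 gu2 gθ gθ1 gθ2 ut θt : ℝ → ℝ}
    (hdu : ∀ x, HasDerivAt gu (gu1 x) x) (hdu1 : ∀ x, HasDerivAt gu1 (gu2 x) x)
    (hdθ : ∀ x, HasDerivAt gθ (gθ1 x) x) (hdθ1 : ∀ x, HasDerivAt gθ1 (gθ2 x) x)
    (hcu1 : Continuous gu1) (hcu2 : Continuous gu2)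
    (hcθ1 : Continuous gθ1) (hcθ2 : Continuous gθ2)
    (hut : ∀ x ∈ Set.Icc (0:ℝ) 1, ut x = s * (n * gu2 x - α * gθ2 x))
    (hθt : ∀ x ∈ Set.Icc (0:ℝ) 1, θt x = κ * gθ2 x + s * ((n+1) * gu x - α * gθ x))
    (hbu0 : gu1 0 = 0) (hbu1 : gu1 1 = 0) (hbθ0 : gθ1 0 = 0) (hbθ1 : gθ1 1 = 0)
    (hmean : ∫ x in (0:ℝ)..1, gu x = 0)
    (hA : A = ((n+1)^2/α + 1)/n)
    (hsmall : s * (A * α^2) / (2*n) ≤ κ/2) :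
    ∫ x in (0:ℝ)..1, (A * gu x * ut x + gθ x * θt x)
      ≤ -(min (1/A) α * s) * ∫ x in (0:ℝ)..1, (A/2 * (gu x)^2 + 1/2 * (gθ x)^2) := by
  have hcu : Continuous gu := Differentiable.continuous (fun x => (hdu x).differentiableAt)
  have hcθ : Continuous gθ := Differentiable.continuous (fun x => (hdθ x).differentiableAt)
  have hA0 : 0 < A := by rw [hA]; positivity
  set c := min (1/A) α with hc
  have hc0 : 0 < c := lt_min (by positivity) hα
  -- base integrals
  set P := ∫ x in (0:ℝ)..1, (gu1 x)^2 with hP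
  set Q := ∫ x in (0:ℝ)..1, (gθ1 x)^2 with hQ
  set R := ∫ x in (0:ℝ)..1, gu1 x * gθ1 x with hR
  set S := ∫ x in (0:ℝ)..1, gu x * gθ x with hS
  set U := ∫ x in (0:ℝ)..1, (gu x)^2 with hU
  set W := ∫ x in (0:ℝ)..1, (gθ x)^2 with hW
  have hP0 : 0 ≤ P := intervalIntegral.integral_nonneg (by norm_num) (fun x _ => sq_nonneg _)
  have hQ0 : 0 ≤ Q := intervalIntegral.integral_nonneg (by norm_num) (fun x _ => sq_nonneg _)
  have hU0 : 0 ≤ U := intervalIntegral.integral_nonneg (by norm_num) (fun x _ => sq_nonneg _)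
  have hW0 : 0 ≤ W := intervalIntegral.integral_nonneg (by norm_num) (fun x _ => sq_nonneg _)
  -- integrability of everything continuous
  have ii : ∀ {g : ℝ → ℝ}, Continuous g → IntervalIntegrable g MeasureTheory.volume 0 1 :=
    fun hg => hg.intervalIntegrable 0 1
  -- step 1 : rewrite the integrand
  have step1 : ∫ x in (0:ℝ)..1, (A * gu x * ut x + gθ x * θt x)
      = (s*A*n) * (∫ x in (0:ℝ)..1, gu x * gu2 x)
        - (s*A*α) * (∫ x in (0:ℝ)..1, gu x * gθ2 x)
        + κ * (∫ x in (0:ℝ)..1, gθ x * gθ2 x)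
        + (s*(n+1)) * S - (s*α) * W := by
    have hcongr : ∫ x in (0:ℝ)..1, (A * gu x * ut x + gθ x * θt x)
        = ∫ x in (0:ℝ)..1, ((s*A*n) * (gu x * gu2 x) - (s*A*α) * (gu x * gθ2 x)
            + κ * (gθ x * gθ2 x) + (s*(n+1)) * (gu x * gθ x) - (s*α) * (gθ x)^2) := by
      apply intervalIntegral.integral_congr
      intro x hx
      rw [Set.uIcc_of_le (by norm_num : (0:ℝ) ≤ 1)] at hx
      show A * gu x * ut x + gθ x * θt x = _
      rw [hut x hx, hθt x hx]; ring
    rw [hcongr]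
    rw [intervalIntegral.integral_sub (by
        apply IntervalIntegrable.add
        apply IntervalIntegrable.add
        apply IntervalIntegrable.sub
        · exact ii (continuous_const.fun_mul (hcu.fun_mul hcu2))
        · exact ii (continuous_const.fun_mul (hcu.fun_mul hcθ2))
        · exact ii (continuous_const.fun_mul (hcθ.fun_mul hcθ2))
        · exact ii (continuous_const.fun_mul (hcu.fun_mul hcθ)))
      (ii (continuous_const.fun_mul (hcθ.fun_pow 2))),
      intervalIntegral.integral_add (by
        apply IntervalIntegrable.add
        apply IntervalIntegrable.sub
        · exact ii (continuous_const.fun_mul (hcu.fun_mul hcu2))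
        · exact ii (continuous_const.fun_mul (hcu.fun_mul hcθ2))
        · exact ii (continuous_const.fun_mul (hcθ.fun_mul hcθ2)))
      (ii (continuous_const.fun_mul (hcu.fun_mul hcθ))),
      intervalIntegral.integral_add (by
        apply IntervalIntegrable.sub
        · exact ii (continuous_const.fun_mul (hcu.fun_mul hcu2))
        · exact ii (continuous_const.fun_mul (hcu.fun_mul hcθ2)))
      (ii (continuous_const.fun_mul (hcθ.fun_mul hcθ2))),
      intervalIntegral.integral_sub (ii (continuous_const.fun_mul (hcu.fun_mul hcu2)))
        (ii (continuous_const.fun_mul (hcu.fun_mul hcθ2))),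
      intervalIntegral.integral_const_mul, intervalIntegral.integral_const_mul,
      intervalIntegral.integral_const_mul, intervalIntegral.integral_const_mul,
      intervalIntegral.integral_const_mul]
  -- step 2 : integration by parts
  have ibp1 : ∫ x in (0:ℝ)..1, gu x * gu2 x = -P :=
    (ibp hdu hdu1 hcu1 hcu2 hbu0 hbu1).trans (by rw [hP]; congr 1; apply intervalIntegral.integral_congr; intro x _; simp [sq])
  have ibp2 : ∫ x in (0:ℝ)..1, gu x * gθ2 x = -R :=
    (ibp hdu hdθ1 hcu1 hcθ2 hbθ0 hbθ1).trans (by rw [hR])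
  have ibp3 : ∫ x in (0:ℝ)..1, gθ x * gθ2 x = -Q :=
    (ibp hdθ hdθ1 hcθ1 hcθ2 hbθ0 hbθ1).trans (by rw [hQ]; congr 1; apply intervalIntegral.integral_congr; intro x _; simp [sq])
  -- step 3 : Young bounds
  have young1 : R ≤ n/(2*α) * P + α/(2*n) * Q := by
    have hpt : ∀ x ∈ Set.Icc (0:ℝ) 1,
        gu1 x * gθ1 x ≤ n/(2*α) * (gu1 x)^2 + α/(2*n) * (gθ1 x)^2 := by
      intro x _
      have e : n/(2*α) * (gu1 x)^2 + α/(2*n) * (gθ1 x)^2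
          = (n^2*(gu1 x)^2 + α^2*(gθ1 x)^2)/(2*α*n) := by field_simp
      rw [e, le_div_iff₀ (by positivity)]
      nlinarith [sq_nonneg (n * gu1 x - α * gθ1 x)]
    calc R ≤ ∫ x in (0:ℝ)..1, (n/(2*α) * (gu1 x)^2 + α/(2*n) * (gθ1 x)^2) := by
          apply intervalIntegral.integral_mono_on (by norm_num)
            (ii (hcu1.mul hcθ1))
            ((ii ((continuous_const.mul (hcu1.pow 2)).add
              (continuous_const.mul (hcθ1.pow 2)))))
          exact hpt
      _ = n/(2*α) * P + α/(2*n) * Q := by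
          rw [intervalIntegral.integral_add (ii (continuous_const.fun_mul (hcu1.fun_pow 2)))
            (ii (continuous_const.fun_mul (hcθ1.fun_pow 2))),
            intervalIntegral.integral_const_mul, intervalIntegral.integral_const_mul]
  have young2 : S ≤ (n+1)/(2*α) * U + α/(2*(n+1)) * W := by
    have hpt : ∀ x ∈ Set.Icc (0:ℝ) 1,
        gu x * gθ x ≤ (n+1)/(2*α) * (gu x)^2 + α/(2*(n+1)) * (gθ x)^2 := by
      intro x _
      have e : (n+1)/(2*α) * (gu x)^2 + α/(2*(n+1)) * (gθ x)^2
          = ((n+1)^2*(gu x)^2 + α^2*(gθ x)^2)/(2*α*(n+1)) := by field_simp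
      rw [e, le_div_iff₀ (by positivity)]
      nlinarith [sq_nonneg ((n+1) * gu x - α * gθ x)]
    calc S ≤ ∫ x in (0:ℝ)..1, ((n+1)/(2*α) * (gu x)^2 + α/(2*(n+1)) * (gθ x)^2) := by
          apply intervalIntegral.integral_mono_on (by norm_num)
            (ii (hcu.mul hcθ))
            ((ii ((continuous_const.mul (hcu.pow 2)).add
              (continuous_const.mul (hcθ.pow 2)))))
          exact hpt
      _ = (n+1)/(2*α) * U + α/(2*(n+1)) * W := by
          rw [intervalIntegral.integral_add (ii (continuous_const.fun_mul (hcu.fun_pow 2)))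
            (ii (continuous_const.fun_mul (hcθ.fun_pow 2))),
            intervalIntegral.integral_const_mul, intervalIntegral.integral_const_mul]
  -- Poincaré
  have hpoin : U ≤ P := poincare hdu hcu1 hmean
  -- split the energy integral
  have Esplit : ∫ x in (0:ℝ)..1, (A/2 * (gu x)^2 + 1/2 * (gθ x)^2) = A/2 * U + 1/2 * W := by
    rw [intervalIntegral.integral_add (ii (continuous_const.fun_mul (hcu.fun_pow 2)))
      (ii (continuous_const.fun_mul (hcθ.fun_pow 2))),
      intervalIntegral.integral_const_mul, intervalIntegral.integral_const_mul]
  rw [step1, ibp1, ibp2, ibp3, Esplit]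
  -- final arithmetic
  have hcA : c * (A/2) ≤ 1/2 := by
    have : c ≤ 1/A := min_le_left _ _
    calc c * (A/2) ≤ (1/A) * (A/2) := by
          apply mul_le_mul_of_nonneg_right this (by positivity)
      _ = 1/2 := by field_simp
  have hcα : c * (1/2) ≤ α/2 := by
    have : c ≤ α := min_le_right _ _
    linarith
  -- chain of inequalities
  have key1 : (s*A*n) * (-P) - (s*A*α) * (-R) + κ * (-Q) + (s*(n+1)) * S - (s*α) * W
      ≤ -(s*A*n) * P + (s*A*α) * (n/(2*α) * P + α/(2*n) * Q) - κ * Q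
        + (s*(n+1)) * ((n+1)/(2*α) * U + α/(2*(n+1)) * W) - (s*α) * W := by
    have h1 : (s*A*α) * R ≤ (s*A*α) * (n/(2*α) * P + α/(2*n) * Q) :=
      mul_le_mul_of_nonneg_left young1 (by positivity)
    have h2 : (s*(n+1)) * S ≤ (s*(n+1)) * ((n+1)/(2*α) * U + α/(2*(n+1)) * W) :=
      mul_le_mul_of_nonneg_left young2 (by positivity)
    nlinarith [h1, h2]
  have hAn : A * n / 2 = (n+1)^2/(2*α) + 1/2 := by
    rw [hA]; field_simp
  have key2 : -(s*A*n) * P + (s*A*α) * (n/(2*α) * P + α/(2*n) * Q) - κ * Q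
        + (s*(n+1)) * ((n+1)/(2*α) * U + α/(2*(n+1)) * W) - (s*α) * W
      ≤ -(s/2) * U + (s * (A * α^2) / (2*n) - κ) * Q - (s*α/2) * W := by
    have e1 : (s*A*α) * (n/(2*α) * P) = s*A*n/2 * P := by field_simp
    have e2 : (s*A*α) * (α/(2*n) * Q) = s * (A*α^2)/(2*n) * Q := by field_simp
    have e3 : (s*(n+1)) * (α/(2*(n+1)) * W) = s*α/2 * W := by field_simp
    -- -(sAn)P + sAn/2 P + s(n+1)²/(2α) U ≤ -(s/2) U  using U ≤ P and A n/2 = (n+1)²/(2α)+1/2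
    have hcoef : -(s*A*n) * P + s*A*n/2 * P + (s*(n+1)) * ((n+1)/(2*α) * U) ≤ -(s/2) * U := by
      have hPU : -(s*A*n/2) * P ≤ -(s*A*n/2) * U := by
        apply mul_le_mul_of_nonpos_left hpoin
        have : 0 < s*A*n/2 := by positivity
        linarith
      have e4 : (s*(n+1)) * ((n+1)/(2*α) * U) = s * ((n+1)^2/(2*α)) * U := by
        field_simp
      have e5 : -(s*A*n/2) * U + s * ((n+1)^2/(2*α)) * U = -(s/2) * U := by
        have h5 : A*n/2 - (n+1)^2/(2*α) = 1/2 := by rw [hAn]; ring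
        linear_combination (-(s*U)) * h5
      nlinarith [hPU]
    nlinarith [hcoef]
  have key3 : -(s/2) * U + (s * (A * α^2) / (2*n) - κ) * Q - (s*α/2) * W
      ≤ -(c * s) * (A/2 * U + 1/2 * W) := by
    have hQterm : (s * (A * α^2) / (2*n) - κ) * Q ≤ 0 := by
      apply mul_nonpos_of_nonpos_of_nonneg _ hQ0
      linarith
    have hUterm : -(s/2) * U ≤ -(c*s) * (A/2 * U) := by
      have : c * (A/2) * U ≤ (1/2) * U := mul_le_mul_of_nonneg_right hcA hU0
      nlinarith [this]
    have hWterm : -(s*α/2) * W ≤ -(c*s) * (1/2 * W) := by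
      have : c * (1/2) * W ≤ (α/2) * W := mul_le_mul_of_nonneg_right hcα hW0
      nlinarith [this]
    nlinarith [hQterm, hUterm, hWterm]
  calc (s*A*n) * (-P) - (s*A*α) * (-R) + κ * (-Q) + (s*(n+1)) * S - (s*α) * W
      ≤ -(c * s) * (A/2 * U + 1/2 * W) := le_trans key1 (le_trans key2 key3)
    _ = -(c * s) * (A/2 * U + 1/2 * W) := rfl

set_option maxHeartbeats 4000000 in
open Real in
/-- Energy decay for the linearized problem with thermal diffusion:
there exist A > 0 and T > 0 such that the energy is nonincreasing on [T,∞)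
and tends to 0 as t → ∞. -/
theorem stmt_9 (α n κ c₀ : ℝ) (hα : 0 < α) (hn : 0 < n) (hκ : 0 < κ) (hc₀ : 0 < c₀)
    (u θ : ℝ → ℝ → ℝ)
    (hsmooth_u : ContDiff ℝ (⊤ : ℕ∞) (fun p : ℝ × ℝ => u p.1 p.2))
    (hsmooth_θ : ContDiff ℝ (⊤ : ℕ∞) (fun p : ℝ × ℝ => θ p.1 p.2))
    (hu : ∀ x ∈ Set.Icc (0:ℝ) 1, ∀ t, 0 ≤ t →
      deriv (fun s => u x s) t
        = (1 / (α * t + c₀)) * (n * deriv (deriv (fun y => u y t)) x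
            - α * deriv (deriv (fun y => θ y t)) x))
    (hθ : ∀ x ∈ Set.Icc (0:ℝ) 1, ∀ t, 0 ≤ t →
      deriv (fun s => θ x s) t - κ * deriv (deriv (fun y => θ y t)) x
        = (1 / (α * t + c₀)) * ((n + 1) * u x t - α * θ x t))
    (hbc_u : ∀ t, 0 ≤ t → deriv (fun y => u y t) 0 = 0 ∧ deriv (fun y => u y t) 1 = 0)
    (hbc_θ : ∀ t, 0 ≤ t → deriv (fun y => θ y t) 0 = 0 ∧ deriv (fun y => θ y t) 1 = 0)
    (hmean : ∀ t, 0 ≤ t → ∫ x in (0:ℝ)..1, u x t = 0) :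
    ∃ A : ℝ, 0 < A ∧ ∃ T : ℝ, 0 < T ∧
      AntitoneOn (fun t => ∫ x in (0:ℝ)..1, (A / 2 * (u x t) ^ 2 + 1 / 2 * (θ x t) ^ 2))
        (Set.Ici T) ∧
      Filter.Tendsto (fun t => ∫ x in (0:ℝ)..1, (A / 2 * (u x t) ^ 2 + 1 / 2 * (θ x t) ^ 2))
        Filter.atTop (nhds 0) := by
  have hα' := hα.le
  set A : ℝ := ((n+1)^2/α + 1)/n with hAdef
  have hA0 : 0 < A := by rw [hAdef]; positivity
  set T : ℝ := max 1 (A*α/(n*κ)) with hTdef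
  have hT0 : 0 < T := lt_of_lt_of_le one_pos (le_max_left _ _)
  set c : ℝ := min (1/A) α with hcdef
  have hc0 : 0 < c := lt_min (by positivity) hα
  -- uncurried functions
  set Uf : ℝ × ℝ → ℝ := fun p => u p.1 p.2 with hUf
  set Θf : ℝ × ℝ → ℝ := fun p => θ p.1 p.2 with hΘf
  set fE : ℝ × ℝ → ℝ := fun p => A / 2 * (u p.1 p.2) ^ 2 + 1 / 2 * (θ p.1 p.2) ^ 2 with hfEdef
  have hfE : ContDiff ℝ (⊤ : ℕ∞) fE :=
    (contDiff_const.mul (hsmooth_u.pow 2)).add (contDiff_const.mul (hsmooth_θ.pow 2))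
  set E : ℝ → ℝ := fun t => ∫ x in (0:ℝ)..1, (A / 2 * (u x t) ^ 2 + 1 / 2 * (θ x t) ^ 2)
    with hEdef
  set D : ℝ → ℝ := fun t => ∫ x in (0:ℝ)..1,
      (A * u x t * pdt Uf (x, t) + θ x t * pdt Θf (x, t)) with hDdef
  -- derivative of the energy
  have hEd : ∀ t, HasDerivAt E (D t) t := by
    intro t
    have h1 : HasDerivAt (fun t => ∫ x in (0:ℝ)..1, fE (x, t))
        (∫ x in (0:ℝ)..1, pdt fE (x, t)) t := hasDerivAt_integral hfE t
    have h2 : ∀ x, pdt fE (x, t) = A * u x t * pdt Uf (x, t) + θ x t * pdt Θf (x, t) := by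
      intro x
      have combo : HasDerivAt (fun s => A / 2 * (u x s) ^ 2 + 1 / 2 * (θ x s) ^ 2)
          (A / 2 * ((2:ℕ) * (u x t) ^ 1 * pdt Uf (x, t))
            + 1 / 2 * ((2:ℕ) * (θ x t) ^ 1 * pdt Θf (x, t))) t :=
        (((chast hsmooth_u x t).pow 2).const_mul (A/2)).add
          (((chast hsmooth_θ x t).pow 2).const_mul (1/2))
      have := (hasDerivAt_pdt hfE x t).unique combo
      rw [this]; push_cast; ring
    have h3 : (∫ x in (0:ℝ)..1, pdt fE (x, t)) = D t := by
      rw [hDdef]; exact intervalIntegral.integral_congr (fun x _ => h2 x)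
    rw [← h3]; exact h1
  -- nonnegativity of the energy
  have hE0 : ∀ t, 0 ≤ E t := fun t =>
    intervalIntegral.integral_nonneg (by norm_num) (fun x _ => by positivity)
  -- key derivative estimate
  have key : ∀ t, T ≤ t → D t ≤ -(c * (1/(α*t+c₀))) * E t := by
    intro t ht
    have ht0 : (0:ℝ) ≤ t := le_trans (le_trans zero_le_one (le_max_left _ _)) ht
    have hden : 0 < α * t + c₀ := by positivity
    have hs : 0 < 1/(α*t+c₀) := by positivity
    have hsmall : (1/(α*t+c₀)) * (A * α^2) / (2*n) ≤ κ/2 := by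
      have h2 : A * α ≤ n * κ * t := by
        have h1 : A*α/(n*κ) ≤ t := le_trans (le_max_right _ _) ht
        rw [div_le_iff₀ (by positivity)] at h1
        linarith
      have hkey : A * α^2 ≤ n * κ * (α*t+c₀) := by
        nlinarith [mul_le_mul_of_nonneg_left h2 hα', mul_pos (mul_pos hn hκ) hc₀]
      have e : (1/(α*t+c₀)) * (A * α^2) / (2*n) = (A*α^2) / (2*n*(α*t+c₀)) := by
        field_simp
      rw [e, div_le_div_iff₀ (by positivity) (by norm_num : (0:ℝ) < 2)]
      nlinarith [hkey]
    have hb_u := hbc_u t ht0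
    have hb_θ := hbc_θ t ht0
    have hres := deriv_bound (A := A) (s := 1/(α*t+c₀)) hα hn hκ hs
      (gu := fun x => u x t) (gu1 := fun x => pdx Uf (x,t)) (gu2 := fun x => pdx (pdx Uf) (x,t))
      (gθ := fun x => θ x t) (gθ1 := fun x => pdx Θf (x,t)) (gθ2 := fun x => pdx (pdx Θf) (x,t))
      (ut := fun x => pdt Uf (x,t)) (θt := fun x => pdt Θf (x,t))
      (fun x => chasx hsmooth_u x t) (fun x => chasxx hsmooth_u x t)
      (fun x => chasx hsmooth_θ x t) (fun x => chasxx hsmooth_θ x t)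
      (ccont_x hsmooth_u t) (ccont_xx hsmooth_u t)
      (ccont_x hsmooth_θ t) (ccont_xx hsmooth_θ t)
      (by
        intro x hx
        simp only [hUf, hΘf]
        rw [← cderiv_t hsmooth_u x t, hu x hx t ht0,
          cderiv_xx hsmooth_u x t, cderiv_xx hsmooth_θ x t])
      (by
        intro x hx
        have h := hθ x hx t ht0
        simp only [hUf, hΘf]
        rw [← cderiv_t hsmooth_θ x t, ← cderiv_xx hsmooth_θ x t]
        linarith [h])
      (by simp only [hUf]; rw [← cderiv_x hsmooth_u 0 t]; exact hb_u.1)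
      (by simp only [hUf]; rw [← cderiv_x hsmooth_u 1 t]; exact hb_u.2)
      (by simp only [hΘf]; rw [← cderiv_x hsmooth_θ 0 t]; exact hb_θ.1)
      (by simp only [hΘf]; rw [← cderiv_x hsmooth_θ 1 t]; exact hb_θ.2)
      (hmean t ht0) hAdef hsmall
    calc D t ≤ -(min (1/A) α * (1/(α*t+c₀))) *
          ∫ x in (0:ℝ)..1, (A/2 * (u x t)^2 + 1/2 * (θ x t)^2) := hres
      _ = -(c * (1/(α*t+c₀))) * E t := by rw [hcdef, hEdef]
  -- deriv E = D
  have hderivE : ∀ t, deriv E t = D t := fun t => (hEd t).deriv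
  -- Part 1 : AntitoneOn
  have hanti : AntitoneOn E (Set.Ici T) := by
    apply antitoneOn_of_deriv_nonpos (convex_Ici T)
    · exact (Differentiable.continuous (fun t => (hEd t).differentiableAt)).continuousOn
    · exact fun t _ => (hEd t).differentiableAt.differentiableWithinAt
    · intro t ht
      rw [interior_Ici] at ht
      rw [hderivE t]
      have h1 := key t (le_of_lt ht)
      have ht0 : (0:ℝ) < t := lt_trans hT0 ht
      have hden : 0 < α * t + c₀ := by positivity
      have h2 : 0 ≤ (c * (1/(α*t+c₀))) * E t := by
        apply mul_nonneg (by positivity) (hE0 t)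
      linarith
  -- Part 2 : Tendsto
  set β : ℝ := c / α with hβdef
  have hβ0 : 0 < β := by positivity
  set G : ℝ → ℝ := fun t => (α*t+c₀) ^ β * E t with hGdef
  have hGd : ∀ t, 0 < t → HasDerivAt G
      (β * (α*t+c₀) ^ (β-1) * α * E t + (α*t+c₀) ^ β * D t) t := by
    intro t ht0
    have hden : 0 < α * t + c₀ := by positivity
    have h1 : HasDerivAt (fun t : ℝ => α*t+c₀) α t := by
      simpa using ((hasDerivAt_id t).const_mul α).add_const c₀
    have h2 : HasDerivAt (fun t : ℝ => (α*t+c₀) ^ β) (β * (α*t+c₀) ^ (β-1) * α) t := by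
      have := (Real.hasDerivAt_rpow_const (x := α*t+c₀) (p := β)
        (Or.inl (ne_of_gt hden))).comp t h1
      simpa [mul_comm, mul_assoc, Function.comp_def] using this
    exact h2.mul (hEd t)
  have hGanti : AntitoneOn G (Set.Ici T) := by
    apply antitoneOn_of_deriv_nonpos (convex_Ici T)
    · intro t ht
      exact ((hGd t (lt_of_lt_of_le hT0 ht)).continuousAt).continuousWithinAt
    · intro t ht
      rw [interior_Ici] at ht
      exact (hGd t (lt_trans hT0 ht)).differentiableAt.differentiableWithinAt
    · intro t ht
      rw [interior_Ici] at ht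
      have ht0 : (0:ℝ) < t := lt_trans hT0 ht
      have hden : 0 < α * t + c₀ := by positivity
      rw [(hGd t ht0).deriv]
      have h1 := key t (le_of_lt ht)
      have hrp : (0:ℝ) ≤ (α*t+c₀) ^ β := Real.rpow_nonneg hden.le β
      have h2 : (α*t+c₀) ^ β * D t ≤ (α*t+c₀) ^ β * (-(c * (1/(α*t+c₀))) * E t) :=
        mul_le_mul_of_nonneg_left h1 hrp
      have h3 : (α*t+c₀) ^ β * (1/(α*t+c₀)) = (α*t+c₀) ^ (β-1) := by
        rw [one_div, ← Real.rpow_neg_one (α*t+c₀), ← Real.rpow_add hden]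
        ring_nf
      have h4 : (α*t+c₀) ^ β * (-(c * (1/(α*t+c₀))) * E t)
          = -(c * ((α*t+c₀) ^ (β-1) * E t)) := by
        rw [← h3]; ring
      have h5 : β * (α*t+c₀) ^ (β-1) * α = c * (α*t+c₀) ^ (β-1) := by
        rw [hβdef]; field_simp
      rw [h5]
      linarith [h2, h4]
  -- the decay bound
  have hbound : ∀ t, T ≤ t → E t ≤ G T * (α*t+c₀) ^ (-β) := by
    intro t ht
    have ht0 : (0:ℝ) < t := lt_of_lt_of_le hT0 ht
    have hden : 0 < α * t + c₀ := by positivity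
    have hG : G t ≤ G T := hGanti (Set.self_mem_Ici) ht ht
    have hinv : (0:ℝ) ≤ (α*t+c₀) ^ (-β) := Real.rpow_nonneg hden.le _
    have hEt : E t = (α*t+c₀) ^ (-β) * G t := by
      rw [hGdef]
      have : (α*t+c₀) ^ (-β) * (α*t+c₀) ^ β = 1 := by
        rw [← Real.rpow_add hden]; simp
      calc E t = ((α*t+c₀) ^ (-β) * (α*t+c₀) ^ β) * E t := by rw [this]; ring
        _ = (α*t+c₀) ^ (-β) * ((α*t+c₀) ^ β * E t) := by ring
    rw [hEt]
    calc (α*t+c₀) ^ (-β) * G t ≤ (α*t+c₀) ^ (-β) * G T :=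
          mul_le_mul_of_nonneg_left hG hinv
      _ = G T * (α*t+c₀) ^ (-β) := by ring
  have htend : Filter.Tendsto E Filter.atTop (nhds 0) := by
    have h1 : Filter.Tendsto (fun t : ℝ => α*t+c₀) Filter.atTop Filter.atTop := by
      apply Filter.tendsto_atTop_add_const_right
      exact Filter.Tendsto.const_mul_atTop hα Filter.tendsto_id
    have h2 : Filter.Tendsto (fun t : ℝ => (α*t+c₀) ^ (-β)) Filter.atTop (nhds 0) :=
      (tendsto_rpow_neg_atTop hβ0).comp h1
    have h3 : Filter.Tendsto (fun t : ℝ => G T * (α*t+c₀) ^ (-β)) Filter.atTop (nhds 0) := by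
      have := h2.const_mul (G T)
      simpa using this
    apply tendsto_of_tendsto_of_tendsto_of_le_of_le' tendsto_const_nhds h3
    · exact Filter.Eventually.of_forall hE0
    · filter_upwards [Filter.eventually_ge_atTop T] with t ht
      exact hbound t ht
  exact ⟨A, hA0, T, hT0, hanti, htend⟩
end

section
/- Under the same hypotheses but for all t ≥ 0, there exist B > 0 and C_B > 0 such that ∫₀¹ ((1/2)ū² + (B/2)θ̄²)(x,t) dx ≤ e^{C_B t} ∫₀¹ ((1/2)ū² + (B/2)θ̄²)(x,0) dx. -/
open MeasureTheory intervalIntegral Set Metric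

noncomputable def pd (v : ℝ × ℝ) (F : ℝ × ℝ → ℝ) (p : ℝ × ℝ) : ℝ := fderiv ℝ F p v

lemma pd_fst {F : ℝ × ℝ → ℝ} (hF : ContDiff ℝ (⊤ : ℕ∞) F) (x t : ℝ) :
    HasDerivAt (fun y => F (y, t)) (pd (1, 0) F (x, t)) x :=
  (hF.differentiable (by simp) (x, t)).hasFDerivAt.comp_hasDerivAt x
    ((hasDerivAt_id x).prodMk (hasDerivAt_const x t))

lemma pd_snd {F : ℝ × ℝ → ℝ} (hF : ContDiff ℝ (⊤ : ℕ∞) F) (x t : ℝ) :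
    HasDerivAt (fun s => F (x, s)) (pd (0, 1) F (x, t)) t :=
  (hF.differentiable (by simp) (x, t)).hasFDerivAt.comp_hasDerivAt t
    ((hasDerivAt_const t x).prodMk (hasDerivAt_id t))

lemma contDiff_pd {F : ℝ × ℝ → ℝ} (hF : ContDiff ℝ (⊤ : ℕ∞) F) (v : ℝ × ℝ) :
    ContDiff ℝ (⊤ : ℕ∞) (pd v F) :=
  (ContinuousLinearMap.apply ℝ ℝ v).contDiff.comp (hF.fderiv_right (by simp))

lemma cont_slice {f : ℝ × ℝ → ℝ} (hf : Continuous f) (t : ℝ) :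
    Continuous (fun y : ℝ => f (y, t)) :=
  hf.comp (continuous_id.prodMk continuous_const)

lemma ibp_helper {f g : ℝ × ℝ → ℝ} (hf : ContDiff ℝ (⊤ : ℕ∞) f) (hg : ContDiff ℝ (⊤ : ℕ∞) g) (t : ℝ)
    (h0 : pd (1, 0) g (0, t) = 0) (h1 : pd (1, 0) g (1, t) = 0) :
    ∫ x in (0:ℝ)..1, f (x, t) * pd (1, 0) (pd (1, 0) g) (x, t)
      = - ∫ x in (0:ℝ)..1, pd (1, 0) f (x, t) * pd (1, 0) g (x, t) := by
  have key := intervalIntegral.integral_mul_deriv_eq_deriv_mul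
    (a := (0:ℝ)) (b := 1)
    (u := fun y => f (y, t)) (u' := fun y => pd (1, 0) f (y, t))
    (v := fun y => pd (1, 0) g (y, t)) (v' := fun y => pd (1, 0) (pd (1, 0) g) (y, t))
    (fun x _ => pd_fst hf x t) (fun x _ => pd_fst (contDiff_pd hg _) x t)
    ((cont_slice (contDiff_pd hf _).continuous t).intervalIntegrable 0 1)
    ((cont_slice (contDiff_pd (contDiff_pd hg _) _).continuous t).intervalIntegrable 0 1)
  simp only [h0, h1, mul_zero, zero_sub, sub_zero] at key
  simpa using key

lemma key_ineq {α n κ c₀ B CB s a b U T : ℝ} (hα : 0 < α) (hn : 0 < n) (hκ : 0 < κ)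
    (hc₀ : 0 < c₀) (hB : 0 < B) (hs0 : 0 < s) (hs1 : s ≤ 1 / c₀)
    (hBκ : α ^ 2 / (4 * n) * (1 / c₀) ≤ B * κ)
    (hCB1 : B * (n + 1) / c₀ ≤ CB) (hCB2 : B * (n + 1) / c₀ ≤ CB * B) :
    -(s * n) * a ^ 2 + s * α * (a * b) - B * κ * b ^ 2
        + B * (s * ((n + 1) * (U * T) - α * T ^ 2))
      ≤ CB * (1 / 2 * U ^ 2 + B / 2 * T ^ 2) := by
  have h0 : α * (a * b) ≤ n * a ^ 2 + α ^ 2 / (4 * n) * b ^ 2 := by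
    have h := div_nonneg (sq_nonneg (2 * n * a - α * b)) (by positivity : (0:ℝ) ≤ 4 * n)
    have he : (2 * n * a - α * b) ^ 2 / (4 * n)
        = n * a ^ 2 - α * (a * b) + α ^ 2 / (4 * n) * b ^ 2 := by
      field_simp
      ring
    linarith [he ▸ h]
  have h1 : s * (α * (a * b)) ≤ s * (n * a ^ 2 + α ^ 2 / (4 * n) * b ^ 2) :=
    mul_le_mul_of_nonneg_left h0 hs0.le
  have h2 : s * (α ^ 2 / (4 * n) * b ^ 2) ≤ B * κ * b ^ 2 := by
    have hc : s * (α ^ 2 / (4 * n)) ≤ B * κ := by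
      have := mul_le_mul_of_nonneg_right hs1 (by positivity : (0:ℝ) ≤ α ^ 2 / (4 * n))
      linarith
    have := mul_le_mul_of_nonneg_right hc (sq_nonneg b)
    linarith
  have hUT : U * T ≤ 1 / 2 * U ^ 2 + 1 / 2 * T ^ 2 := by nlinarith [sq_nonneg (U - T)]
  have hcpos : 0 ≤ B * s * (n + 1) := by positivity
  have h3 : B * s * (n + 1) * (U * T) ≤ B * s * (n + 1) * (1 / 2 * U ^ 2 + 1 / 2 * T ^ 2) :=
    mul_le_mul_of_nonneg_left hUT hcpos
  have hsB : B * s * (n + 1) ≤ B * (n + 1) / c₀ := by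
    have h := mul_le_mul_of_nonneg_right hs1 (by positivity : (0:ℝ) ≤ B * (n + 1))
    calc B * s * (n + 1) = s * (B * (n + 1)) := by ring
      _ ≤ 1 / c₀ * (B * (n + 1)) := h
      _ = B * (n + 1) / c₀ := by ring
  have h4 : B * s * (n + 1) * (1 / 2 * U ^ 2 + 1 / 2 * T ^ 2)
      ≤ CB * (1 / 2 * U ^ 2 + B / 2 * T ^ 2) := by
    have hq : 0 ≤ 1 / 2 * U ^ 2 + 1 / 2 * T ^ 2 := by positivity
    have step1 : B * s * (n + 1) * (1 / 2 * U ^ 2 + 1 / 2 * T ^ 2)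
        ≤ B * (n + 1) / c₀ * (1 / 2 * U ^ 2 + 1 / 2 * T ^ 2) :=
      mul_le_mul_of_nonneg_right hsB hq
    have stepU := mul_le_mul_of_nonneg_right hCB1 (by positivity : (0:ℝ) ≤ 1 / 2 * U ^ 2)
    have stepT := mul_le_mul_of_nonneg_right hCB2 (by positivity : (0:ℝ) ≤ 1 / 2 * T ^ 2)
    linarith [step1, stepU, stepT]
  have h5 : 0 ≤ B * (s * (α * T ^ 2)) := by positivity
  linarith [h1, h2, h3, h4, h5]

lemma hasDerivAt_energy {f g : ℝ × ℝ → ℝ} (hf : ContDiff ℝ (⊤ : ℕ∞) f) (hg : ContDiff ℝ (⊤ : ℕ∞) g)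
    (b : ℝ) (t₀ : ℝ) :
    HasDerivAt (fun t => ∫ x in (0:ℝ)..1, (1 / 2 * (f (x, t)) ^ 2 + b / 2 * (g (x, t)) ^ 2))
      (∫ x in (0:ℝ)..1,
        (f (x, t₀) * pd (0, 1) f (x, t₀) + b * (g (x, t₀) * pd (0, 1) g (x, t₀)))) t₀ := by
  have hcet : Continuous (fun p : ℝ × ℝ =>
      f p * pd (0, 1) f p + b * (g p * pd (0, 1) g p)) :=
    (hf.continuous.mul (contDiff_pd hf _).continuous).add
      (continuous_const.mul (hg.continuous.mul (contDiff_pd hg _).continuous))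
  obtain ⟨C, hC⟩ := (isCompact_Icc.prod
      (isCompact_Icc : IsCompact (Icc (t₀ - 1) (t₀ + 1)))).exists_bound_of_continuousOn
      hcet.continuousOn
  have main := intervalIntegral.hasDerivAt_integral_of_dominated_loc_of_deriv_le
    (𝕜 := ℝ) (μ := volume) (a := (0:ℝ)) (b := 1)
    (F := fun t x => 1 / 2 * (f (x, t)) ^ 2 + b / 2 * (g (x, t)) ^ 2)
    (F' := fun t x => f (x, t) * pd (0, 1) f (x, t) + b * (g (x, t) * pd (0, 1) g (x, t)))
    (x₀ := t₀) (s := ball t₀ 1) (bound := fun _ => C) (ball_mem_nhds t₀ one_pos)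
    (Filter.Eventually.of_forall fun s =>
      (((continuous_const.mul ((cont_slice hf.continuous s).pow 2)).add
        (continuous_const.mul ((cont_slice hg.continuous s).pow 2))).aestronglyMeasurable))
    (((continuous_const.mul ((cont_slice hf.continuous t₀).pow 2)).add
        (continuous_const.mul ((cont_slice hg.continuous t₀).pow 2))).intervalIntegrable 0 1)
    ((cont_slice hcet t₀).aestronglyMeasurable)
    ?_ (intervalIntegrable_const) ?_
  · exact main.2
  · refine Filter.Eventually.of_forall fun x hx s hs => ?_
    refine hC _ ⟨?_, ?_⟩
    · exact Ioc_subset_Icc_self (by simpa [uIoc_of_le (by norm_num : (0:ℝ) ≤ 1)] using hx)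
    · have : |s - t₀| < 1 := by simpa [Real.dist_eq] using mem_ball.mp hs
      have := abs_sub_lt_iff.mp this
      exact ⟨by linarith [this.2], by linarith [this.1]⟩
  · refine Filter.Eventually.of_forall fun x _ s _ => ?_
    have h := (((pd_snd hf x s).pow 2).const_mul (1 / 2)).add
      (((pd_snd hg x s).pow 2).const_mul (b / 2))
    convert h using 1
    · ext y; simp only [Pi.add_apply, Pi.pow_apply]
    · push_cast; ring

set_option maxHeartbeats 1000000 in
/-- Intermediate-time energy bound: there exist B > 0 and C_B > 0 with
E(t) ≤ e^{C_B t} E(0) for all t ≥ 0. -/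
theorem stmt_10 (α n κ c₀ : ℝ) (hα : 0 < α) (hn : 0 < n) (hκ : 0 < κ) (hc₀ : 0 < c₀)
    (u θ : ℝ → ℝ → ℝ)
    (hsmooth_u : ContDiff ℝ (⊤ : ℕ∞) (fun p : ℝ × ℝ => u p.1 p.2))
    (hsmooth_θ : ContDiff ℝ (⊤ : ℕ∞) (fun p : ℝ × ℝ => θ p.1 p.2))
    (hu : ∀ x ∈ Set.Icc (0:ℝ) 1, ∀ t, 0 ≤ t →
      deriv (fun s => u x s) t
        = (1 / (α * t + c₀)) * (n * deriv (deriv (fun y => u y t)) x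
            - α * deriv (deriv (fun y => θ y t)) x))
    (hθ : ∀ x ∈ Set.Icc (0:ℝ) 1, ∀ t, 0 ≤ t →
      deriv (fun s => θ x s) t - κ * deriv (deriv (fun y => θ y t)) x
        = (1 / (α * t + c₀)) * ((n + 1) * u x t - α * θ x t))
    (hbc_u : ∀ t, 0 ≤ t → deriv (fun y => u y t) 0 = 0 ∧ deriv (fun y => u y t) 1 = 0)
    (hbc_θ : ∀ t, 0 ≤ t → deriv (fun y => θ y t) 0 = 0 ∧ deriv (fun y => θ y t) 1 = 0)
    (hmean : ∀ t, 0 ≤ t → ∫ x in (0:ℝ)..1, u x t = 0) :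
    ∃ B : ℝ, 0 < B ∧ ∃ CB : ℝ, 0 < CB ∧ ∀ t, 0 ≤ t →
      (∫ x in (0:ℝ)..1, (1 / 2 * (u x t) ^ 2 + B / 2 * (θ x t) ^ 2))
        ≤ Real.exp (CB * t) *
          ∫ x in (0:ℝ)..1, (1 / 2 * (u x 0) ^ 2 + B / 2 * (θ x 0) ^ 2) := by
  have hcu : Continuous (fun p : ℝ × ℝ => u p.1 p.2) := hsmooth_u.continuous
  have hcθ : Continuous (fun p : ℝ × ℝ => θ p.1 p.2) := hsmooth_θ.continuous
  have cux : Continuous (pd (1, 0) (fun p : ℝ × ℝ => u p.1 p.2)) := (contDiff_pd hsmooth_u _).continuous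
  have cuxx : Continuous (pd (1, 0) (pd (1, 0) (fun p : ℝ × ℝ => u p.1 p.2))) := (contDiff_pd (contDiff_pd hsmooth_u _) _).continuous
  have cut : Continuous (pd (0, 1) (fun p : ℝ × ℝ => u p.1 p.2)) := (contDiff_pd hsmooth_u _).continuous
  have ctx : Continuous (pd (1, 0) (fun p : ℝ × ℝ => θ p.1 p.2)) := (contDiff_pd hsmooth_θ _).continuous
  have ctxx : Continuous (pd (1, 0) (pd (1, 0) (fun p : ℝ × ℝ => θ p.1 p.2))) := (contDiff_pd (contDiff_pd hsmooth_θ _) _).continuous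
  have ctt : Continuous (pd (0, 1) (fun p : ℝ × ℝ => θ p.1 p.2)) := (contDiff_pd hsmooth_θ _).continuous
  have hux : ∀ x t : ℝ, HasDerivAt (fun y => u y t) ((pd (1, 0) (fun p : ℝ × ℝ => u p.1 p.2)) (x, t)) x :=
    fun x t => pd_fst hsmooth_u x t
  have huxx : ∀ x t : ℝ, HasDerivAt (fun y => (pd (1, 0) (fun p : ℝ × ℝ => u p.1 p.2)) (y, t)) ((pd (1, 0) (pd (1, 0) (fun p : ℝ × ℝ => u p.1 p.2))) (x, t)) x :=
    fun x t => pd_fst (contDiff_pd hsmooth_u _) x t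
  have hut : ∀ x t : ℝ, HasDerivAt (fun s => u x s) ((pd (0, 1) (fun p : ℝ × ℝ => u p.1 p.2)) (x, t)) t :=
    fun x t => pd_snd hsmooth_u x t
  have htx : ∀ x t : ℝ, HasDerivAt (fun y => θ y t) ((pd (1, 0) (fun p : ℝ × ℝ => θ p.1 p.2)) (x, t)) x :=
    fun x t => pd_fst hsmooth_θ x t
  have htxx : ∀ x t : ℝ, HasDerivAt (fun y => (pd (1, 0) (fun p : ℝ × ℝ => θ p.1 p.2)) (y, t)) ((pd (1, 0) (pd (1, 0) (fun p : ℝ × ℝ => θ p.1 p.2))) (x, t)) x :=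
    fun x t => pd_fst (contDiff_pd hsmooth_θ _) x t
  have htt : ∀ x t : ℝ, HasDerivAt (fun s => θ x s) ((pd (0, 1) (fun p : ℝ × ℝ => θ p.1 p.2)) (x, t)) t :=
    fun x t => pd_snd hsmooth_θ x t
  have hdu : ∀ t x : ℝ, deriv (fun y => u y t) x = (pd (1, 0) (fun p : ℝ × ℝ => u p.1 p.2)) (x, t) := fun t x => (hux x t).deriv
  have hdθ : ∀ t x : ℝ, deriv (fun y => θ y t) x = (pd (1, 0) (fun p : ℝ × ℝ => θ p.1 p.2)) (x, t) := fun t x => (htx x t).deriv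
  have hd2u : ∀ t x : ℝ, deriv (deriv (fun y => u y t)) x = (pd (1, 0) (pd (1, 0) (fun p : ℝ × ℝ => u p.1 p.2))) (x, t) := by
    intro t x
    have h : deriv (fun y => u y t) = fun y => (pd (1, 0) (fun p : ℝ × ℝ => u p.1 p.2)) (y, t) := funext fun y => (hux y t).deriv
    rw [h]
    exact (huxx x t).deriv
  have hd2θ : ∀ t x : ℝ, deriv (deriv (fun y => θ y t)) x = (pd (1, 0) (pd (1, 0) (fun p : ℝ × ℝ => θ p.1 p.2))) (x, t) := by
    intro t x
    have h : deriv (fun y => θ y t) = fun y => (pd (1, 0) (fun p : ℝ × ℝ => θ p.1 p.2)) (y, t) := funext fun y => (htx y t).deriv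
    rw [h]
    exact (htxx x t).deriv
  have hu2 : ∀ x ∈ Set.Icc (0:ℝ) 1, ∀ t, 0 ≤ t →
      (pd (0, 1) (fun p : ℝ × ℝ => u p.1 p.2)) (x, t) = 1 / (α * t + c₀) * (n * (pd (1, 0) (pd (1, 0) (fun p : ℝ × ℝ => u p.1 p.2))) (x, t) - α * (pd (1, 0) (pd (1, 0) (fun p : ℝ × ℝ => θ p.1 p.2))) (x, t)) := by
    intro x hx t ht
    rw [← (hut x t).deriv, hu x hx t ht, hd2u, hd2θ]
  have hθ2 : ∀ x ∈ Set.Icc (0:ℝ) 1, ∀ t, 0 ≤ t →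
      (pd (0, 1) (fun p : ℝ × ℝ => θ p.1 p.2)) (x, t) = κ * (pd (1, 0) (pd (1, 0) (fun p : ℝ × ℝ => θ p.1 p.2))) (x, t) + 1 / (α * t + c₀) * ((n + 1) * u x t - α * θ x t) := by
    intro x hx t ht
    have h := hθ x hx t ht
    rw [hd2θ, (htt x t).deriv] at h
    linarith
  have hbu : ∀ t, 0 ≤ t → (pd (1, 0) (fun p : ℝ × ℝ => u p.1 p.2)) (0, t) = 0 ∧ (pd (1, 0) (fun p : ℝ × ℝ => u p.1 p.2)) (1, t) = 0 := by
    intro t ht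
    exact ⟨(hdu t 0).symm.trans (hbc_u t ht).1, (hdu t 1).symm.trans (hbc_u t ht).2⟩
  have hbθ : ∀ t, 0 ≤ t → (pd (1, 0) (fun p : ℝ × ℝ => θ p.1 p.2)) (0, t) = 0 ∧ (pd (1, 0) (fun p : ℝ × ℝ => θ p.1 p.2)) (1, t) = 0 := by
    intro t ht
    exact ⟨(hdθ t 0).symm.trans (hbc_θ t ht).1, (hdθ t 1).symm.trans (hbc_θ t ht).2⟩
  set B : ℝ := α ^ 2 / (4 * n * κ * c₀) with hB_def
  have hB : 0 < B := by positivity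
  set CB : ℝ := (B + 1) * (n + 1) / c₀ with hCB_def
  have hCBpos : 0 < CB := by positivity
  have hBκ : α ^ 2 / (4 * n) * (1 / c₀) ≤ B * κ := by
    apply le_of_eq
    rw [hB_def]
    field_simp
  have hCB1 : B * (n + 1) / c₀ ≤ CB := by
    rw [hCB_def]
    gcongr
    linarith
  have hCB2 : B * (n + 1) / c₀ ≤ CB * B := by
    have he : CB * B = B * (n + 1) / c₀ + B ^ 2 * (n + 1) / c₀ := by rw [hCB_def]; ring
    have : 0 ≤ B ^ 2 * (n + 1) / c₀ := by positivity
    linarith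
  refine ⟨B, hB, CB, hCBpos, ?_⟩
  intro t ht
  set E : ℝ → ℝ := fun s => ∫ x in (0:ℝ)..1, (1 / 2 * (u x s) ^ 2 + B / 2 * (θ x s) ^ 2)
    with hE_def
  have hE' : ∀ s : ℝ, HasDerivAt E
      (∫ x in (0:ℝ)..1, (u x s * (pd (0, 1) (fun p : ℝ × ℝ => u p.1 p.2)) (x, s) + B * (θ x s * (pd (0, 1) (fun p : ℝ × ℝ => θ p.1 p.2)) (x, s)))) s := by
    intro s
    rw [hE_def]
    exact hasDerivAt_energy hsmooth_u hsmooth_θ B s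
  have hDle : ∀ s, 0 ≤ s →
      (∫ x in (0:ℝ)..1, (u x s * (pd (0, 1) (fun p : ℝ × ℝ => u p.1 p.2)) (x, s) + B * (θ x s * (pd (0, 1) (fun p : ℝ × ℝ => θ p.1 p.2)) (x, s)))) ≤ CB * E s := by
    intro s hs
    have hden : 0 < α * s + c₀ := by nlinarith [mul_nonneg hα.le hs]
    have hst0 : 0 < 1 / (α * s + c₀) := by positivity
    have hst1 : 1 / (α * s + c₀) ≤ 1 / c₀ := by
      apply one_div_le_one_div_of_le hc₀
      nlinarith [mul_nonneg hα.le hs]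
    have hJ1 : ∫ x in (0:ℝ)..1, ((pd (1, 0) (fun p : ℝ × ℝ => u p.1 p.2)) (x, s) * (pd (1, 0) (fun p : ℝ × ℝ => u p.1 p.2)) (x, s) + u x s * (pd (1, 0) (pd (1, 0) (fun p : ℝ × ℝ => u p.1 p.2))) (x, s)) = 0 := by
      have h := intervalIntegral.integral_deriv_mul_eq_sub (a := (0:ℝ)) (b := 1)
        (u := fun y => u y s) (v := fun y => (pd (1, 0) (fun p : ℝ × ℝ => u p.1 p.2)) (y, s))
        (u' := fun y => (pd (1, 0) (fun p : ℝ × ℝ => u p.1 p.2)) (y, s)) (v' := fun y => (pd (1, 0) (pd (1, 0) (fun p : ℝ × ℝ => u p.1 p.2))) (y, s))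
        (fun x _ => hux x s) (fun x _ => huxx x s)
        ((cont_slice cux s).intervalIntegrable 0 1)
        ((cont_slice cuxx s).intervalIntegrable 0 1)
      simp only [(hbu s hs).1, (hbu s hs).2, mul_zero, sub_zero] at h
      simpa using h
    have hJ2 : ∫ x in (0:ℝ)..1, ((pd (1, 0) (fun p : ℝ × ℝ => u p.1 p.2)) (x, s) * (pd (1, 0) (fun p : ℝ × ℝ => θ p.1 p.2)) (x, s) + u x s * (pd (1, 0) (pd (1, 0) (fun p : ℝ × ℝ => θ p.1 p.2))) (x, s)) = 0 := by
      have h := intervalIntegral.integral_deriv_mul_eq_sub (a := (0:ℝ)) (b := 1)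
        (u := fun y => u y s) (v := fun y => (pd (1, 0) (fun p : ℝ × ℝ => θ p.1 p.2)) (y, s))
        (u' := fun y => (pd (1, 0) (fun p : ℝ × ℝ => u p.1 p.2)) (y, s)) (v' := fun y => (pd (1, 0) (pd (1, 0) (fun p : ℝ × ℝ => θ p.1 p.2))) (y, s))
        (fun x _ => hux x s) (fun x _ => htxx x s)
        ((cont_slice cux s).intervalIntegrable 0 1)
        ((cont_slice ctxx s).intervalIntegrable 0 1)
      simp only [(hbθ s hs).1, (hbθ s hs).2, mul_zero, sub_zero] at h
      simpa using h
    have hJ3 : ∫ x in (0:ℝ)..1, ((pd (1, 0) (fun p : ℝ × ℝ => θ p.1 p.2)) (x, s) * (pd (1, 0) (fun p : ℝ × ℝ => θ p.1 p.2)) (x, s) + θ x s * (pd (1, 0) (pd (1, 0) (fun p : ℝ × ℝ => θ p.1 p.2))) (x, s)) = 0 := by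
      have h := intervalIntegral.integral_deriv_mul_eq_sub (a := (0:ℝ)) (b := 1)
        (u := fun y => θ y s) (v := fun y => (pd (1, 0) (fun p : ℝ × ℝ => θ p.1 p.2)) (y, s))
        (u' := fun y => (pd (1, 0) (fun p : ℝ × ℝ => θ p.1 p.2)) (y, s)) (v' := fun y => (pd (1, 0) (pd (1, 0) (fun p : ℝ × ℝ => θ p.1 p.2))) (y, s))
        (fun x _ => htx x s) (fun x _ => htxx x s)
        ((cont_slice ctx s).intervalIntegrable 0 1)
        ((cont_slice ctxx s).intervalIntegrable 0 1)
      simp only [(hbθ s hs).1, (hbθ s hs).2, mul_zero, sub_zero] at h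
      simpa using h
    have hptw : Set.EqOn (fun x => u x s * (pd (0, 1) (fun p : ℝ × ℝ => u p.1 p.2)) (x, s) + B * (θ x s * (pd (0, 1) (fun p : ℝ × ℝ => θ p.1 p.2)) (x, s)))
        (fun x =>
          (-(1 / (α * s + c₀) * n) * (pd (1, 0) (fun p : ℝ × ℝ => u p.1 p.2)) (x, s) ^ 2
            + 1 / (α * s + c₀) * α * ((pd (1, 0) (fun p : ℝ × ℝ => u p.1 p.2)) (x, s) * (pd (1, 0) (fun p : ℝ × ℝ => θ p.1 p.2)) (x, s))
            - B * κ * (pd (1, 0) (fun p : ℝ × ℝ => θ p.1 p.2)) (x, s) ^ 2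
            + B * (1 / (α * s + c₀) * ((n + 1) * (u x s * θ x s) - α * (θ x s) ^ 2)))
          + (1 / (α * s + c₀) * n * ((pd (1, 0) (fun p : ℝ × ℝ => u p.1 p.2)) (x, s) * (pd (1, 0) (fun p : ℝ × ℝ => u p.1 p.2)) (x, s) + u x s * (pd (1, 0) (pd (1, 0) (fun p : ℝ × ℝ => u p.1 p.2))) (x, s))
            - 1 / (α * s + c₀) * α * ((pd (1, 0) (fun p : ℝ × ℝ => u p.1 p.2)) (x, s) * (pd (1, 0) (fun p : ℝ × ℝ => θ p.1 p.2)) (x, s) + u x s * (pd (1, 0) (pd (1, 0) (fun p : ℝ × ℝ => θ p.1 p.2))) (x, s))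
            + B * κ * ((pd (1, 0) (fun p : ℝ × ℝ => θ p.1 p.2)) (x, s) * (pd (1, 0) (fun p : ℝ × ℝ => θ p.1 p.2)) (x, s) + θ x s * (pd (1, 0) (pd (1, 0) (fun p : ℝ × ℝ => θ p.1 p.2))) (x, s))))
        (Set.uIcc 0 1) := by
      intro x hx
      have hx' : x ∈ Set.Icc (0:ℝ) 1 := by
        rwa [Set.uIcc_of_le (by norm_num : (0:ℝ) ≤ 1)] at hx
      simp only
      rw [hu2 x hx' s hs, hθ2 x hx' s hs]
      ring
    rw [intervalIntegral.integral_congr hptw]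
    have int1 : IntervalIntegrable (fun x =>
        -(1 / (α * s + c₀) * n) * (pd (1, 0) (fun p : ℝ × ℝ => u p.1 p.2)) (x, s) ^ 2
          + 1 / (α * s + c₀) * α * ((pd (1, 0) (fun p : ℝ × ℝ => u p.1 p.2)) (x, s) * (pd (1, 0) (fun p : ℝ × ℝ => θ p.1 p.2)) (x, s))
          - B * κ * (pd (1, 0) (fun p : ℝ × ℝ => θ p.1 p.2)) (x, s) ^ 2
          + B * (1 / (α * s + c₀) * ((n + 1) * (u x s * θ x s) - α * (θ x s) ^ 2)))
        MeasureTheory.volume 0 1 := by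
      apply Continuous.intervalIntegrable
      fun_prop
    have int2a : IntervalIntegrable (fun x =>
        1 / (α * s + c₀) * n * ((pd (1, 0) (fun p : ℝ × ℝ => u p.1 p.2)) (x, s) * (pd (1, 0) (fun p : ℝ × ℝ => u p.1 p.2)) (x, s) + u x s * (pd (1, 0) (pd (1, 0) (fun p : ℝ × ℝ => u p.1 p.2))) (x, s)))
        MeasureTheory.volume 0 1 := by
      apply Continuous.intervalIntegrable
      fun_prop
    have int2b : IntervalIntegrable (fun x =>
        1 / (α * s + c₀) * α * ((pd (1, 0) (fun p : ℝ × ℝ => u p.1 p.2)) (x, s) * (pd (1, 0) (fun p : ℝ × ℝ => θ p.1 p.2)) (x, s) + u x s * (pd (1, 0) (pd (1, 0) (fun p : ℝ × ℝ => θ p.1 p.2))) (x, s)))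
        MeasureTheory.volume 0 1 := by
      apply Continuous.intervalIntegrable
      fun_prop
    have int2c : IntervalIntegrable (fun x =>
        B * κ * ((pd (1, 0) (fun p : ℝ × ℝ => θ p.1 p.2)) (x, s) * (pd (1, 0) (fun p : ℝ × ℝ => θ p.1 p.2)) (x, s) + θ x s * (pd (1, 0) (pd (1, 0) (fun p : ℝ × ℝ => θ p.1 p.2))) (x, s)))
        MeasureTheory.volume 0 1 := by
      apply Continuous.intervalIntegrable
      fun_prop
    rw [intervalIntegral.integral_add int1 (((int2a.sub int2b).add int2c))]
    have hP : (∫ x in (0:ℝ)..1,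
        (1 / (α * s + c₀) * n * ((pd (1, 0) (fun p : ℝ × ℝ => u p.1 p.2)) (x, s) * (pd (1, 0) (fun p : ℝ × ℝ => u p.1 p.2)) (x, s) + u x s * (pd (1, 0) (pd (1, 0) (fun p : ℝ × ℝ => u p.1 p.2))) (x, s))
          - 1 / (α * s + c₀) * α * ((pd (1, 0) (fun p : ℝ × ℝ => u p.1 p.2)) (x, s) * (pd (1, 0) (fun p : ℝ × ℝ => θ p.1 p.2)) (x, s) + u x s * (pd (1, 0) (pd (1, 0) (fun p : ℝ × ℝ => θ p.1 p.2))) (x, s))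
          + B * κ * ((pd (1, 0) (fun p : ℝ × ℝ => θ p.1 p.2)) (x, s) * (pd (1, 0) (fun p : ℝ × ℝ => θ p.1 p.2)) (x, s) + θ x s * (pd (1, 0) (pd (1, 0) (fun p : ℝ × ℝ => θ p.1 p.2))) (x, s)))) = 0 := by
      rw [intervalIntegral.integral_add (int2a.sub int2b) int2c,
        intervalIntegral.integral_sub int2a int2b,
        intervalIntegral.integral_const_mul, intervalIntegral.integral_const_mul,
        intervalIntegral.integral_const_mul, hJ1, hJ2, hJ3]
      ring
    rw [hP, add_zero]
    have hpt2 : ∀ x ∈ Set.Icc (0:ℝ) 1,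
        (-(1 / (α * s + c₀) * n) * (pd (1, 0) (fun p : ℝ × ℝ => u p.1 p.2)) (x, s) ^ 2
          + 1 / (α * s + c₀) * α * ((pd (1, 0) (fun p : ℝ × ℝ => u p.1 p.2)) (x, s) * (pd (1, 0) (fun p : ℝ × ℝ => θ p.1 p.2)) (x, s))
          - B * κ * (pd (1, 0) (fun p : ℝ × ℝ => θ p.1 p.2)) (x, s) ^ 2
          + B * (1 / (α * s + c₀) * ((n + 1) * (u x s * θ x s) - α * (θ x s) ^ 2)))
        ≤ CB * (1 / 2 * (u x s) ^ 2 + B / 2 * (θ x s) ^ 2) := by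
      intro x _
      exact key_ineq hα hn hκ hc₀ hB hst0 hst1 hBκ hCB1 hCB2
    have hmono := intervalIntegral.integral_mono_on (by norm_num : (0:ℝ) ≤ 1) int1
      (by apply Continuous.intervalIntegrable; fun_prop :
        IntervalIntegrable (fun x => CB * (1 / 2 * (u x s) ^ 2 + B / 2 * (θ x s) ^ 2))
          MeasureTheory.volume 0 1) hpt2
    refine le_trans hmono ?_
    rw [hE_def, intervalIntegral.integral_const_mul]
  set G : ℝ → ℝ := fun s => Real.exp (-CB * s) * E s with hG_def
  have hG' : ∀ s : ℝ, HasDerivAt G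
      (Real.exp (-CB * s) * (-CB) * E s + Real.exp (-CB * s) *
        (∫ x in (0:ℝ)..1, (u x s * (pd (0, 1) (fun p : ℝ × ℝ => u p.1 p.2)) (x, s) + B * (θ x s * (pd (0, 1) (fun p : ℝ × ℝ => θ p.1 p.2)) (x, s))))) s := by
    intro s
    have h1 : HasDerivAt (fun s : ℝ => -CB * s) (-CB) s := by
      simpa using (hasDerivAt_id s).const_mul (-CB)
    have hexp : HasDerivAt (fun s : ℝ => Real.exp (-CB * s))
        (Real.exp (-CB * s) * (-CB)) s := (Real.hasDerivAt_exp _).comp s h1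
    rw [hG_def]
    exact hexp.mul (hE' s)
  have hGanti : AntitoneOn G (Set.Ici 0) := by
    apply antitoneOn_of_deriv_nonpos (convex_Ici 0)
    · exact Continuous.continuousOn (continuous_iff_continuousAt.mpr
        fun x => (hG' x).differentiableAt.continuousAt)
    · intro x hx
      exact (hG' x).differentiableAt.differentiableWithinAt
    · intro x hx
      rw [interior_Ici, Set.mem_Ioi] at hx
      rw [(hG' x).deriv]
      have hd := hDle x hx.le
      nlinarith [Real.exp_pos (-CB * x),
        mul_le_mul_of_nonneg_left hd (Real.exp_pos (-CB * x)).le]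
  have hfin : G t ≤ G 0 := hGanti (Set.self_mem_Ici) (Set.mem_Ici.mpr ht) ht
  rw [hG_def] at hfin
  simp only [mul_zero, neg_zero, Real.exp_zero, one_mul] at hfin
  have h2 := mul_le_mul_of_nonneg_left hfin (Real.exp_pos (CB * t)).le
  calc E t = Real.exp (CB * t) * (Real.exp (-CB * t) * E t) := by
        rw [← mul_assoc, ← Real.exp_add]
        simp
    _ ≤ Real.exp (CB * t) * E 0 := h2
end

section
/- If (u, σ, θ) solves dσ/dη = u − σ, ν dθ/dη = σu − 1, σ = e^{−αθ}u^n with u, σ > 0, then the functions a = 1/σ and b = 1/(σu) satisfy the planar autonomous system da/dη = a(1 − a²/b), db/dη = (α/(νn))(c_ν b − 1 − ((n+1)/α)ν a²), where c_ν = 1 + ν(n+1)/α. -/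
/-! Work with logarithmic derivatives. The constraint `σ = exp(-αθ) uⁿ` gives
`n u'/u = σ'/σ + α θ'`, while `σ'/σ = u/σ - 1` and `θ' = (σu - 1)/ν` come from the other two
equations; since `1/f` has derivative `-(1/f)·(f'/f)`, both derivatives are then rational
expressions in `σ` and `u`, i.e. in `a` and `b = a/u`. -/

open Real

theorem deriv_one_div_eq_neg_mul_logDeriv {𝕜 : Type*} [NontriviallyNormedField 𝕜]
    {f : 𝕜 → 𝕜} {x : 𝕜} (hf : DifferentiableAt 𝕜 f x) (hx : f x ≠ 0) :
    deriv (fun s => 1 / f s) x = -(1 / f x) * logDeriv f x := by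
  simp only [one_div, deriv_fun_inv'' hf hx, logDeriv_apply]
  field_simp

theorem logDeriv_exp_comp {f : ℝ → ℝ} {x : ℝ} (hf : DifferentiableAt ℝ f x) :
    logDeriv (fun s => exp (f s)) x = deriv f x := by
  rw [← Function.comp_def, logDeriv_comp differentiableAt_exp hf, Real.logDeriv_exp,
    Pi.one_apply, one_mul]

theorem logDeriv_rpow_const {f : ℝ → ℝ} {x : ℝ} (hf : DifferentiableAt ℝ f x) (hx : 0 < f x)
    (r : ℝ) : logDeriv (fun s => f s ^ r) x = r * logDeriv f x := by
  rw [logDeriv_apply, (hf.hasDerivAt.rpow_const (Or.inl hx.ne')).deriv, logDeriv_apply,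
    rpow_sub_one hx.ne']
  field_simp

theorem logDeriv_exp_mul_rpow {g f : ℝ → ℝ} {x : ℝ} (hg : DifferentiableAt ℝ g x)
    (hf : DifferentiableAt ℝ f x) (hx : 0 < f x) (r : ℝ) :
    logDeriv (fun s => exp (g s) * f s ^ r) x = deriv g x + r * logDeriv f x := by
  rw [logDeriv_mul (f := fun s => exp (g s)) x (exp_ne_zero _) (rpow_pos_of_pos hx r).ne' hg.exp
    (hf.rpow_const (Or.inl hx.ne')), logDeriv_exp_comp hg, logDeriv_rpow_const hf hx]

/-- The change of variables a = 1/σ, b = 1/(σu) transforms the autonomous system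
into the planar system for (a, b). -/
theorem stmt_16 (α n ν : ℝ) (hα : 0 < α) (hn : 0 < n) (hν : 0 < ν)
    (u σ θ : ℝ → ℝ)
    (hpos_u : ∀ η : ℝ, 0 < u η) (hpos_σ : ∀ η : ℝ, 0 < σ η)
    (hdiff_u : Differentiable ℝ u) (hdiff_σ : Differentiable ℝ σ)
    (hdiff_θ : Differentiable ℝ θ)
    (heq : ∀ η : ℝ,
      deriv σ η = u η - σ η ∧
      ν * deriv θ η = σ η * u η - 1 ∧
      σ η = Real.exp (-(α * θ η)) * (u η) ^ n) :
    ∀ η : ℝ,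
      deriv (fun s => 1 / σ s) η
        = (1 / σ η) * (1 - (1 / σ η) ^ 2 / (1 / (σ η * u η))) ∧
      deriv (fun s => 1 / (σ s * u s)) η
        = (α / (ν * n)) * ((1 + ν * (n + 1) / α) * (1 / (σ η * u η)) - 1
            - ((n + 1) / α) * ν * (1 / σ η) ^ 2) := by
  intro η
  obtain ⟨hσ', hθ', -⟩ := heq η
  have hσ := (hpos_σ η).ne'
  have hu := (hpos_u η).ne'
  have hlogσ : logDeriv σ η = u η / σ η - 1 := by
    rw [logDeriv_apply, hσ']
    field_simp
  have hlogu : logDeriv u η = (logDeriv σ η + α * deriv θ η) / n := by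
    have hσ_eq : σ = fun s => exp (-(α * θ s)) * u s ^ n := funext fun s => (heq s).2.2
    have hexponent : HasDerivAt (fun s => -(α * θ s)) (-(α * deriv θ η)) η :=
      ((hdiff_θ η).hasDerivAt.const_mul α).neg
    have hlog_constraint :=
      logDeriv_exp_mul_rpow hexponent.differentiableAt (hdiff_u η) (hpos_u η) n
    rw [← hσ_eq, hexponent.deriv] at hlog_constraint
    field_simp
    linarith
  have hθ : deriv θ η = (σ η * u η - 1) / ν := by
    field_simp
    linarith
  constructor
  · rw [deriv_one_div_eq_neg_mul_logDeriv (hdiff_σ η) hσ, hlogσ]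
    field_simp
    ring
  · rw [deriv_one_div_eq_neg_mul_logDeriv (f := fun s => σ s * u s)
        ((hdiff_σ η).mul (hdiff_u η)) (mul_ne_zero hσ hu),
      logDeriv_mul η hσ hu (hdiff_σ η) (hdiff_u η), hlogu, hθ, hlogσ]
    field_simp
    ring
end

section
/- Let F(a,b) = (a(1 − a²/b), (α/(νn))(c_ν b − 1 − ((n+1)/α)ν a²)) with c_ν = 1 + ν(n+1)/α. The equilibria of F with a ≥ 0, b > 0 are exactly P = (0, 1/c_ν) and Q = (1, 1). At P the Jacobian of F has eigenvalues 1 and (α/(nν))c_ν, both positive with (α/(nν))c_ν > 1; at Q the Jacobian has one positive and one negative real eigenvalue, i.e., Q is a hyperbolic saddle. -/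
/-!
With `k = α / (ν n)` and `m = ν (n + 1) / α`, so that `c = 1 + m`, the field is
`F(a, b) = (a (1 - a² / b), k ((1 + m) b - 1 - m a²))`. On `a = 0` the second component
vanishes only at `b = 1 / (1 + m)`; on `a² = b` it reduces to `k (b - 1)`. The Jacobian at
`P` is diagonal, `diag(1, k (1 + m))`, and `k (1 + m) = α / (ν n) + (n + 1) / n > 1`.
At `Q` it is `[[-2, 1], [-2 k m, k (1 + m)]]`, whose determinant `-2 k` is negative, so
its two real eigenvalues have opposite signs.
-/

section LinearAlgebra

variable {L : ℝ × ℝ → ℝ × ℝ} {a b c d : ℝ}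

/-- Both `(b, μ - a)` and `(μ - d, c)` are eigenvectors for a root `μ` of the characteristic
polynomial; they vanish simultaneously only for a scalar matrix. -/
theorem exists_eigenvector_of_charpoly_root
    (hL : ∀ v : ℝ × ℝ, L v = (a * v.1 + b * v.2, c * v.1 + d * v.2)) {μ : ℝ}
    (hμ : μ ^ 2 - (a + d) * μ + (a * d - b * c) = 0) (hnot : ¬(b = 0 ∧ c = 0 ∧ a = d)) :
    ∃ v : ℝ × ℝ, v ≠ 0 ∧ L v = μ • v := by
  by_cases hv : ((b, μ - a) : ℝ × ℝ) = 0
  · obtain ⟨hb, hμa⟩ : b = 0 ∧ μ - a = 0 := Prod.mk_eq_zero.mp hv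
    refine ⟨(μ - d, c), fun h => hnot ?_, ?_⟩
    · obtain ⟨_, hc⟩ := Prod.mk_eq_zero.mp h
      exact ⟨hb, hc, by linarith⟩
    · rw [hL, Prod.smul_mk, smul_eq_mul, smul_eq_mul, Prod.mk.injEq]
      exact ⟨by linear_combination (-1 : ℝ) * hμ, by ring⟩
  · refine ⟨(b, μ - a), hv, ?_⟩
    rw [hL, Prod.smul_mk, smul_eq_mul, smul_eq_mul, Prod.mk.injEq]
    exact ⟨by ring, by linear_combination (-1 : ℝ) * hμ⟩

theorem exists_eigenvalues_neg_pos_of_det_neg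
    (hL : ∀ v : ℝ × ℝ, L v = (a * v.1 + b * v.2, c * v.1 + d * v.2))
    (hdet : a * d - b * c < 0) :
    ∃ lm lp : ℝ, lm < 0 ∧ 0 < lp ∧
      ∃ vm vp : ℝ × ℝ, vm ≠ 0 ∧ vp ≠ 0 ∧ L vm = lm • vm ∧ L vp = lp • vp := by
  set t := a + d
  set s := Real.sqrt (t ^ 2 - 4 * (a * d - b * c))
  have hs0 : 0 ≤ s := Real.sqrt_nonneg _
  have hs2 : s ^ 2 = t ^ 2 - 4 * (a * d - b * c) := Real.sq_sqrt (by nlinarith)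
  have hnot : ¬(b = 0 ∧ c = 0 ∧ a = d) := by
    rintro ⟨rfl, rfl, rfl⟩
    nlinarith
  obtain ⟨vm, hvm, hLm⟩ := exists_eigenvector_of_charpoly_root hL (μ := (t - s) / 2)
    (by linear_combination hs2 / 4) hnot
  obtain ⟨vp, hvp, hLp⟩ := exists_eigenvector_of_charpoly_root hL (μ := (t + s) / 2)
    (by linear_combination hs2 / 4) hnot
  exact ⟨(t - s) / 2, (t + s) / 2, by nlinarith, by nlinarith, vm, vp, hvm, hvp, hLm, hLp⟩

end LinearAlgebra

noncomputable def planarField (k m : ℝ) (p : ℝ × ℝ) : ℝ × ℝ :=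
  (p.1 * (1 - p.1 ^ 2 / p.2), k * ((1 + m) * p.2 - 1 - m * p.1 ^ 2))

namespace planarField

variable {k m : ℝ}

theorem fderiv_apply {p : ℝ × ℝ} (hp : p.2 ≠ 0) (v : ℝ × ℝ) :
    fderiv ℝ (planarField k m) p v =
      ((1 - 3 * p.1 ^ 2 / p.2) * v.1 + p.1 ^ 3 / p.2 ^ 2 * v.2,
        -2 * k * m * p.1 * v.1 + k * (1 + m) * v.2) := by
  have hinv : HasFDerivAt (fun q : ℝ × ℝ => q.2⁻¹) _ p :=
    (hasDerivAt_inv hp).hasFDerivAt.comp p hasFDerivAt_snd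
  have h₁ : HasFDerivAt (fun q : ℝ × ℝ => q.1 * (1 - q.1 * q.1 * q.2⁻¹)) _ p :=
    hasFDerivAt_fst.mul ((hasFDerivAt_const 1 p).sub
      ((hasFDerivAt_fst.mul hasFDerivAt_fst).mul hinv))
  have h₂ : HasFDerivAt (fun q : ℝ × ℝ => k * ((1 + m) * q.2 - 1 - m * (q.1 * q.1))) _ p :=
    ((((hasFDerivAt_snd (𝕜 := ℝ) (E := ℝ) (F := ℝ) (p := p)).const_mul (1 + m)).sub_const
      1).sub ((hasFDerivAt_fst.mul hasFDerivAt_fst).const_mul m)).const_mul k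
  have hfun : planarField k m = fun q : ℝ × ℝ =>
      (q.1 * (1 - q.1 * q.1 * q.2⁻¹), k * ((1 + m) * q.2 - 1 - m * (q.1 * q.1))) := by
    funext q
    simp only [planarField, pow_two, div_eq_mul_inv]
  rw [hfun, (h₁.prodMk h₂).fderiv]
  simp only [ContinuousLinearMap.prod_apply, add_apply, smul_apply, sub_apply,
    ContinuousLinearMap.comp_apply, ContinuousLinearMap.coe_fst', ContinuousLinearMap.coe_snd',
    zero_apply, smul_eq_mul, Prod.mk.injEq, ContinuousLinearMap.toSpanSingleton_apply,
    Pi.mul_apply]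
  constructor <;> ring

theorem eq_zero_iff (hk : k ≠ 0) (hm : 1 + m ≠ 0) {a b : ℝ} (ha : 0 ≤ a) (hb : 0 < b) :
    planarField k m (a, b) = 0 ↔
      (a, b) = ((0 : ℝ), 1 / (1 + m)) ∨ (a, b) = ((1 : ℝ), (1 : ℝ)) := by
  simp only [planarField, Prod.mk_eq_zero, Prod.mk.injEq, mul_eq_zero, hk, false_or]
  constructor
  · rintro ⟨rfl | hab, hb'⟩
    · refine Or.inl ⟨rfl, ?_⟩
      field_simp
      linarith
    · have hab : a ^ 2 = b := by
        field_simp at hab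
        linarith
      have hb1 : b = 1 := by linear_combination hb' + m * hab
      subst hb1
      refine Or.inr ⟨?_, rfl⟩
      nlinarith
  · rintro (⟨rfl, rfl⟩ | ⟨rfl, rfl⟩)
    · refine ⟨Or.inl rfl, ?_⟩
      field_simp
      ring
    · exact ⟨Or.inr (by norm_num), by ring⟩

theorem fderiv_apply_at_zero_one_div (hm : 1 + m ≠ 0) (v : ℝ × ℝ) :
    fderiv ℝ (planarField k m) ((0 : ℝ), 1 / (1 + m)) v = (v.1, k * (1 + m) * v.2) := by
  rw [fderiv_apply (by simpa using hm)]
  simp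

theorem exists_eigenvalues_neg_pos_fderiv_at_one_one (hk : 0 < k) :
    ∃ lm lp : ℝ, lm < 0 ∧ 0 < lp ∧
      ∃ vm vp : ℝ × ℝ, vm ≠ 0 ∧ vp ≠ 0 ∧
        fderiv ℝ (planarField k m) ((1 : ℝ), (1 : ℝ)) vm = lm • vm ∧
        fderiv ℝ (planarField k m) ((1 : ℝ), (1 : ℝ)) vp = lp • vp := by
  refine exists_eigenvalues_neg_pos_of_det_neg (a := -2) (b := 1) (c := -2 * k * m)
    (d := k * (1 + m)) (fun v => ?_) (by linarith)
  rw [fderiv_apply one_ne_zero]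
  norm_num

end planarField

/-- Equilibria and their hyperbolicity for the planar vector field F. -/
theorem stmt_17 (α n ν : ℝ) (hα : 0 < α) (hn : 0 < n) (hν : 0 < ν)
    (c : ℝ) (hc : c = 1 + ν * (n + 1) / α)
    (F : ℝ × ℝ → ℝ × ℝ)
    (hF : ∀ p : ℝ × ℝ, F p
      = (p.1 * (1 - p.1 ^ 2 / p.2),
         (α / (ν * n)) * (c * p.2 - 1 - ((n + 1) / α) * ν * p.1 ^ 2))) :
    (∀ a b : ℝ, 0 ≤ a → 0 < b →
      (F (a, b) = 0 ↔ (a, b) = ((0 : ℝ), 1 / c) ∨ (a, b) = ((1 : ℝ), (1 : ℝ)))) ∧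
    (fderiv ℝ F ((0 : ℝ), 1 / c) (1, 0) = (1 : ℝ) • ((1 : ℝ), (0 : ℝ)) ∧
     fderiv ℝ F ((0 : ℝ), 1 / c) (0, 1) = (α / (n * ν) * c) • ((0 : ℝ), (1 : ℝ)) ∧
     1 < α / (n * ν) * c) ∧
    (∃ lm lp : ℝ, lm < 0 ∧ 0 < lp ∧
      ∃ vm vp : ℝ × ℝ, vm ≠ 0 ∧ vp ≠ 0 ∧
        fderiv ℝ F ((1 : ℝ), (1 : ℝ)) vm = lm • vm ∧
        fderiv ℝ F ((1 : ℝ), (1 : ℝ)) vp = lp • vp) := by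
  set k := α / (ν * n)
  set m := ν * (n + 1) / α
  have hk : 0 < k := by positivity
  have hm : 0 < m := by positivity
  have hFk : F = planarField k m := by
    funext p
    rw [hF, hc, planarField]
    congr 1
    ring
  have hkc : α / (n * ν) * c = k * (1 + m) := by rw [hc, mul_comm n]
  have hkc_gt : 1 < k * (1 + m) := by
    have hsplit : k * (1 + m) = k + (n + 1) / n := by
      simp only [k, m]
      field_simp
    have hn_ratio : 1 < (n + 1) / n := by rw [one_lt_div hn]; linarith
    linarith
  subst hFk hc
  refine ⟨fun a b ha hb => planarField.eq_zero_iff hk.ne' (by linarith) ha hb, ⟨?_, ?_, ?_⟩,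
    planarField.exists_eigenvalues_neg_pos_fderiv_at_one_one hk⟩
  · rw [planarField.fderiv_apply_at_zero_one_div (by linarith)]
    simp
  · rw [planarField.fderiv_apply_at_zero_one_div (by linarith), hkc]
    simp
  · rwa [hkc]
end

section
/- The negative eigenvalue λ₋ = (1/2)[((α/(nν))c_ν − 2) − √(((α/(nν))c_ν − 2)² + 8α/(nν))] of the Jacobian of F at Q = (1,1) satisfies 0 < 2 + λ₋ < 2 for all ν > 0. -/
/-! With `b = α / (n ν)` and `t = b c - 2`, the eigenvalue is `λ₋ = (t - √(t² + 8b)) / 2`.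
It is negative because `√(t² + 8b) > |t|`, and after squaring, `λ₋ > -2` becomes `b < t + 2 = b c`,
which is `c > 1`. -/

theorem sub_sqrt_sq_add_neg {t d : ℝ} (hd : 0 < d) : t - √(t ^ 2 + d) < 0 := by
  have : √(t ^ 2) < √(t ^ 2 + d) := Real.sqrt_lt_sqrt (sq_nonneg t) (by linarith)
  rw [Real.sqrt_sq_eq_abs] at this
  linarith [le_abs_self t]

theorem neg_lt_sub_sqrt_sq_add {s t d : ℝ} (hs : 0 < s) (hd : 0 ≤ d) (h : d < s * (s + 2 * t)) :
    -s < t - √(t ^ 2 + d) := by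
  have hst : 0 < s + 2 * t := pos_of_mul_pos_right (hd.trans_lt h) hs.le
  have : √(t ^ 2 + d) < t + s := by
    rw [Real.sqrt_lt' (by linarith)]
    nlinarith
  linarith

/-- The negative eigenvalue λ₋ at the saddle Q satisfies 0 < 2 + λ₋ < 2. -/
theorem stmt_18 (α n ν : ℝ) (hα : 0 < α) (hn : 0 < n) (hν : 0 < ν)
    (c : ℝ) (hc : c = 1 + ν * (n + 1) / α) :
    0 < 2 + (1 / 2) * ((α / (n * ν) * c - 2)
        - Real.sqrt ((α / (n * ν) * c - 2) ^ 2 + 8 * α / (n * ν))) ∧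
    2 + (1 / 2) * ((α / (n * ν) * c - 2)
        - Real.sqrt ((α / (n * ν) * c - 2) ^ 2 + 8 * α / (n * ν))) < 2 := by
  have hb : 0 < α / (n * ν) := by positivity
  have hc1 : 1 < c := by
    rw [hc]
    linarith [show 0 < ν * (n + 1) / α by positivity]
  have hbc : α / (n * ν) < α / (n * ν) * c := lt_mul_of_one_lt_right hb hc1
  have hd : 8 * α / (n * ν) = 8 * (α / (n * ν)) := mul_div_assoc _ _ _
  have hlow := neg_lt_sub_sqrt_sq_add (t := α / (n * ν) * c - 2) (d := 8 * α / (n * ν))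
    four_pos (by positivity) (by rw [hd]; linarith)
  have hup := sub_sqrt_sq_add_neg (t := α / (n * ν) * c - 2) (d := 8 * α / (n * ν))
    (by positivity)
  constructor <;> linarith
end

section
/- The region 𝓡 = {(a,b) : a² ≤ b ≤ 1, 0 ≤ a ≤ 1} is negatively invariant for the flow of F(a,b) = (a(1 − a²/b), (α/(νn))(c_ν b − 1 − ((n+1)/α)ν a²)): on the boundary segment {b = 1, 0 < a < 1} both components of F are strictly positive (so the forward flow exits through it), on the boundary curve {b = a², 0 < a < 1} the first component of F vanishes and the second is strictly negative, and on the segment {a = 0, 1/c_ν < b ≤ 1} the flow is tangent. Moreover, in the interior of 𝓡 the first component of F is strictly positive, so 𝓡 contains no periodic orbit of F. -/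
/-!
Write `k = α/(νn)`. Where `a² ≤ b` the first component `a (1 - a²/b)` of `F` is nonnegative, so
along an orbit in `𝓡` the coordinate `a` is nondecreasing, hence constant on a period of a
periodic orbit. If it vanishes, the uniqueness of the zero solution of `a' = a (1 - a²/b)`
(Grönwall, with `|a'| ≤ |a|`) forces `a ≡ 0`, and then `b` solves the linear equation
`(c b - 1)' = k c (c b - 1)`, whose only periodic solution is constant. If it is positive, then
`a' = 0` puts the orbit on the curve `b = a²`, where `b` is minimal, so `b' = k (a² - 1)`
vanishes too and `a = 1`; the bound `a' ≤ 2 (1 - a)` and Grönwall again give `a ≡ 1`, hence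
`b ≡ 1`.
-/

open Real Set Filter Topology

noncomputable def fieldFst (a b : ℝ) : ℝ := a * (1 - a ^ 2 / b)

def fieldSnd (k c a b : ℝ) : ℝ := k * (c * b - 1 - (c - 1) * a ^ 2)

theorem eq_zero_of_norm_deriv_le_mul_norm_self {E : Type*} [NormedAddCommGroup E]
    [NormedSpace ℝ E] {f f' : ℝ → E} {K a : ℝ} (hf : ∀ t, HasDerivAt f (f' t) t)
    (bound : ∀ t, ‖f' t‖ ≤ K * ‖f t‖) (ha : f a = 0) (t : ℝ) : f t = 0 := by
  have forward : ∀ {g g' : ℝ → E} {a : ℝ}, (∀ t, HasDerivAt g (g' t) t) →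
      (∀ t, ‖g' t‖ ≤ K * ‖g t‖) → g a = 0 → ∀ t, a ≤ t → g t = 0 :=
    fun hg bound ha t hat => eq_zero_of_abs_deriv_le_mul_abs_self_of_eq_zero_right
      (fun s _ => (hg s).continuousAt.continuousWithinAt) (fun s _ => (hg s).hasDerivWithinAt)
      ha (fun s _ => bound s) t ⟨hat, le_rfl⟩
  rcases le_total a t with h | h
  · exact forward hf bound ha t h
  · have hneg : ∀ s, HasDerivAt (fun s => f (-s)) (-f' (-s)) s := fun s =>
      ((hf (-s)).scomp s (hasDerivAt_neg s)).congr_deriv (by simp)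
    simpa using forward hneg (fun s => by simpa using bound (-s)) (by simpa using ha) (-t)
      (neg_le_neg h)

theorem eq_mul_exp_of_hasDerivAt_mul {w : ℝ → ℝ} {r : ℝ} (hw : ∀ t, HasDerivAt w (r * w t) t)
    (t : ℝ) : w t = w 0 * exp (r * t) := by
  have hv : ∀ s, HasDerivAt (fun s => w s * exp (-(r * s))) 0 s := fun s => by
    have he : HasDerivAt (fun s => exp (-(r * s))) (exp (-(r * s)) * -r) s := by
      simpa using ((hasDerivAt_id s).const_mul r).neg.exp
    exact ((hw s).mul he).congr_deriv (by ring)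
  have hconst := is_const_of_deriv_eq_zero (fun s => (hv s).differentiableAt)
    (fun s => (hv s).deriv) t 0
  simp only [mul_zero, neg_zero, exp_zero, mul_one] at hconst
  rw [← hconst, mul_assoc, ← exp_add, neg_add_cancel, exp_zero, mul_one]

theorem eq_zero_of_hasDerivAt_mul_of_periodic {w : ℝ → ℝ} {r T : ℝ} (hr : r ≠ 0) (hT : T ≠ 0)
    (hw : ∀ t, HasDerivAt w (r * w t) t) (hper : w T = w 0) (t : ℝ) : w t = 0 := by
  have hexp : exp (r * T) ≠ 1 := by simp [hr, hT]
  have hw0 : w 0 = 0 := by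
    have := eq_mul_exp_of_hasDerivAt_mul hw T
    rw [hper] at this
    by_contra hne
    exact hexp (mul_left_cancel₀ hne (this.symm.trans (mul_one _).symm))
  rw [eq_mul_exp_of_hasDerivAt_mul hw t, hw0, zero_mul]

section VectorField

variable {a b : ℝ}

theorem fieldFst_zero_left (b : ℝ) : fieldFst 0 b = 0 := by
  simp [fieldFst]

theorem fieldFst_sq_right (ha : a ≠ 0) : fieldFst a (a ^ 2) = 0 := by
  simp [fieldFst, ha]

theorem fieldFst_pos (ha : 0 < a) (hab : a ^ 2 < b) : 0 < fieldFst a b :=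
  mul_pos ha (sub_pos.2 ((div_lt_one ((sq_nonneg a).trans_lt hab)).2 hab))

theorem fieldFst_nonneg (ha : 0 ≤ a) (hab : a ^ 2 ≤ b) : 0 ≤ fieldFst a b :=
  mul_nonneg ha (sub_nonneg.2 (div_le_one_of_le₀ hab ((sq_nonneg a).trans hab)))

theorem fieldFst_le_self (ha : 0 ≤ a) (hab : a ^ 2 ≤ b) : fieldFst a b ≤ a := by
  have : 0 ≤ a * (a ^ 2 / b) := mul_nonneg ha (div_nonneg (sq_nonneg a) ((sq_nonneg a).trans hab))
  unfold fieldFst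
  linarith

theorem fieldFst_le_two_mul_one_sub (ha : 0 ≤ a) (hab : a ^ 2 ≤ b) (hb : b ≤ 1) :
    fieldFst a b ≤ 2 * (1 - a) := by
  rcases ((sq_nonneg a).trans hab).eq_or_lt with hb0 | hb0
  · have : a = 0 := pow_eq_zero_iff two_ne_zero |>.1 (le_antisymm (hb0 ▸ hab) (sq_nonneg a))
    simp [this, fieldFst_zero_left]
  · have : a ^ 2 ≤ a ^ 2 / b := le_div_self (sq_nonneg a) hb0 hb
    have ha1 : a ≤ 1 := by nlinarith
    unfold fieldFst
    nlinarith

theorem sq_eq_of_fieldFst_eq_zero (ha : a ≠ 0) (h : fieldFst a b = 0) : b = a ^ 2 := by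
  have hdiv : a ^ 2 / b = 1 := by
    rcases mul_eq_zero.1 h with h | h
    · exact absurd h ha
    · linarith
  have hb : b ≠ 0 := by rintro rfl; simp at hdiv
  exact ((div_eq_one_iff_eq hb).1 hdiv).symm

theorem fieldSnd_sq_right (k c a : ℝ) : fieldSnd k c a (a ^ 2) = k * (a ^ 2 - 1) := by
  unfold fieldSnd
  ring

theorem fieldSnd_one_right_pos {k c : ℝ} (hk : 0 < k) (hc : 1 < c) (ha : a ^ 2 < 1) :
    0 < fieldSnd k c a 1 := by
  have : fieldSnd k c a 1 = k * ((c - 1) * (1 - a ^ 2)) := by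
    unfold fieldSnd
    ring
  rw [this]
  exact mul_pos hk (mul_pos (by linarith) (by linarith))

end VectorField

section Orbit

variable {k c T : ℝ} {x y : ℝ → ℝ}

theorem fst_eq_zero_of_eq_zero (hx : ∀ t, HasDerivAt x (fieldFst (x t) (y t)) t)
    (hx0 : ∀ t, 0 ≤ x t) (hxy : ∀ t, x t ^ 2 ≤ y t) {a : ℝ} (ha : x a = 0) (t : ℝ) :
    x t = 0 :=
  eq_zero_of_norm_deriv_le_mul_norm_self (K := 1) hx (fun s => by
    rw [norm_of_nonneg (fieldFst_nonneg (hx0 s) (hxy s)), norm_of_nonneg (hx0 s), one_mul]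
    exact fieldFst_le_self (hx0 s) (hxy s)) ha t

theorem fst_eq_one_of_eq_one (hx : ∀ t, HasDerivAt x (fieldFst (x t) (y t)) t)
    (hx0 : ∀ t, 0 ≤ x t) (hxy : ∀ t, x t ^ 2 ≤ y t) (hy1 : ∀ t, y t ≤ 1)
    {a : ℝ} (ha : x a = 1) (t : ℝ) : x t = 1 := by
  have hx1 : ∀ s, x s ≤ 1 := fun s => by nlinarith [hx0 s, hxy s, hy1 s]
  have := eq_zero_of_norm_deriv_le_mul_norm_self (f := fun s => 1 - x s) (K := 2)
    (fun s => (hx s).const_sub 1) (fun s => by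
      rw [norm_neg, norm_of_nonneg (fieldFst_nonneg (hx0 s) (hxy s)),
        norm_of_nonneg (sub_nonneg.2 (hx1 s))]
      exact fieldFst_le_two_mul_one_sub (hx0 s) (hxy s) (hy1 s)) (sub_eq_zero.2 ha.symm) t
  linarith

theorem snd_eq_of_fst_eq_zero (hk : k ≠ 0) (hc : c ≠ 0) (hT : T ≠ 0)
    (hy : ∀ t, HasDerivAt y (fieldSnd k c (x t) (y t)) t) (hx : ∀ t, x t = 0)
    (hyT : y T = y 0) (t : ℝ) : y t = y 0 := by
  have hw : ∀ s, HasDerivAt (fun s => c * y s - 1) (k * c * (c * y s - 1)) s := fun s => by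
    refine (((hy s).const_mul c).sub_const 1).congr_deriv ?_
    simp only [fieldSnd, hx s]
    ring
  have hwt := eq_zero_of_hasDerivAt_mul_of_periodic (mul_ne_zero hk hc) hT hw (by simp [hyT])
  exact mul_left_cancel₀ hc (by linarith [hwt t, hwt 0])

theorem fst_half_eq_one_of_periodic (hk : k ≠ 0) (hT : 0 < T)
    (hx : ∀ t, HasDerivAt x (fieldFst (x t) (y t)) t)
    (hy : ∀ t, HasDerivAt y (fieldSnd k c (x t) (y t)) t)
    (hx0 : ∀ t, 0 ≤ x t) (hxy : ∀ t, x t ^ 2 ≤ y t) (hxT : x T = x 0) (hpos : 0 < x 0) :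
    x (T / 2) = 1 := by
  have hmono : Monotone x :=
    monotone_of_hasDerivAt_nonneg hx fun t => fieldFst_nonneg (hx0 t) (hxy t)
  have hhalf : x (T / 2) = x 0 :=
    le_antisymm (hxT ▸ hmono (by linarith)) (hmono (by linarith))
  have hright : Ioi 0 ∈ 𝓝 (T / 2) := Ioi_mem_nhds (half_pos hT)
  have hmin_x : IsLocalMin x (T / 2) :=
    eventually_of_mem hright fun s hs => hhalf ▸ hmono (le_of_lt hs)
  have hy_half : y (T / 2) = x (T / 2) ^ 2 :=
    sq_eq_of_fieldFst_eq_zero (hhalf ▸ hpos.ne') (hmin_x.hasDerivAt_eq_zero (hx _))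
  have hmin_y : IsLocalMin y (T / 2) := eventually_of_mem hright fun s hs => by
    rw [hy_half]
    exact (pow_le_pow_left₀ (hx0 _) (hhalf ▸ hmono (le_of_lt hs)) 2).trans (hxy s)
  have hsnd := hmin_y.hasDerivAt_eq_zero (hy _)
  rw [hy_half, fieldSnd_sq_right] at hsnd
  have hsq : x (T / 2) ^ 2 = 1 := by
    have := (mul_eq_zero.1 hsnd).resolve_left hk
    linarith
  exact (pow_left_inj₀ (hx0 _) zero_le_one two_ne_zero).1 (by rw [hsq, one_pow])

theorem eq_of_periodic (hk : k ≠ 0) (hc : c ≠ 0) (hT : 0 < T)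
    (hx : ∀ t, HasDerivAt x (fieldFst (x t) (y t)) t)
    (hy : ∀ t, HasDerivAt y (fieldSnd k c (x t) (y t)) t)
    (hxy : ∀ t, x t ^ 2 ≤ y t) (hy1 : ∀ t, y t ≤ 1) (hx0 : ∀ t, 0 ≤ x t)
    (hxT : x T = x 0) (hyT : y T = y 0) (t : ℝ) : x t = x 0 ∧ y t = y 0 := by
  rcases (hx0 0).eq_or_lt with hzero | hpos
  · have hx_zero := fst_eq_zero_of_eq_zero hx hx0 hxy hzero.symm
    exact ⟨by rw [hx_zero, hx_zero], snd_eq_of_fst_eq_zero hk hc hT.ne' hy hx_zero hyT t⟩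
  · have hx_one := fst_eq_one_of_eq_one hx hx0 hxy hy1
      (fst_half_eq_one_of_periodic hk hT hx hy hx0 hxy hxT hpos)
    have hy_one : ∀ s, y s = 1 := fun s => le_antisymm (hy1 s) (by simpa [hx_one s] using hxy s)
    exact ⟨by rw [hx_one, hx_one], by rw [hy_one, hy_one]⟩

end Orbit

/-- The region 𝓡 = {a² ≤ b ≤ 1, 0 ≤ a ≤ 1} is negatively invariant for F, and
contains no nonconstant periodic orbit. -/
theorem stmt_19 (α n ν : ℝ) (hα : 0 < α) (hn : 0 < n) (hν : 0 < ν)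
    (c : ℝ) (hc : c = 1 + ν * (n + 1) / α)
    (F : ℝ × ℝ → ℝ × ℝ)
    (hF : ∀ p : ℝ × ℝ, F p
      = (p.1 * (1 - p.1 ^ 2 / p.2),
         (α / (ν * n)) * (c * p.2 - 1 - ((n + 1) / α) * ν * p.1 ^ 2))) :
    (∀ a : ℝ, 0 < a → a < 1 → 0 < (F (a, 1)).1 ∧ 0 < (F (a, 1)).2) ∧
    (∀ a : ℝ, 0 < a → a < 1 → (F (a, a ^ 2)).1 = 0 ∧ (F (a, a ^ 2)).2 < 0) ∧
    (∀ b : ℝ, 1 / c < b → b ≤ 1 → (F (0, b)).1 = 0) ∧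
    (∀ a b : ℝ, 0 < a → a < 1 → a ^ 2 < b → b < 1 → 0 < (F (a, b)).1) ∧
    (∀ (γ : ℝ → ℝ × ℝ) (T : ℝ), 0 < T →
      (∀ t : ℝ, HasDerivAt γ (F (γ t)) t) →
      (∀ t : ℝ, (γ t).1 ^ 2 ≤ (γ t).2 ∧ (γ t).2 ≤ 1 ∧ 0 ≤ (γ t).1 ∧ (γ t).1 ≤ 1) →
      γ T = γ 0 → ∀ t : ℝ, γ t = γ 0) := by
  set k := α / (ν * n)
  have hk : 0 < k := by positivity
  have hc1 : 1 < c := by rw [hc]; linarith [show 0 < ν * (n + 1) / α by positivity]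
  have hF' : ∀ p, F p = (fieldFst p.1 p.2, fieldSnd k c p.1 p.2) := fun p => by
    rw [hF, fieldFst, fieldSnd, show (n + 1) / α * ν = c - 1 by rw [hc]; field_simp; ring]
  have hsq_lt_one : ∀ a : ℝ, 0 < a → a < 1 → a ^ 2 < 1 := fun a ha0 ha1 => by nlinarith
  simp only [hF']
  refine ⟨fun a ha0 ha1 => ⟨fieldFst_pos ha0 (hsq_lt_one a ha0 ha1),
      fieldSnd_one_right_pos hk hc1 (hsq_lt_one a ha0 ha1)⟩,
    fun a ha0 ha1 => ⟨fieldFst_sq_right ha0.ne', ?_⟩,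
    fun b _ _ => fieldFst_zero_left b,
    fun a b ha0 _ hab _ => fieldFst_pos ha0 hab, ?_⟩
  · rw [fieldSnd_sq_right]
    exact mul_neg_of_pos_of_neg hk (by linarith [hsq_lt_one a ha0 ha1])
  · intro γ T hT hγ hR hper t
    have hx : ∀ t, HasDerivAt (fun s => (γ s).1) (fieldFst (γ t).1 (γ t).2) t := fun t => by
      simpa [hF'] using ((hγ t).hasFDerivAt.fst).hasDerivAt
    have hy : ∀ t, HasDerivAt (fun s => (γ s).2) (fieldSnd k c (γ t).1 (γ t).2) t := fun t => by
      simpa [hF'] using ((hγ t).hasFDerivAt.snd).hasDerivAt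
    obtain ⟨h1, h2⟩ := eq_of_periodic hk.ne' (by linarith : c ≠ 0) hT hx hy
      (fun t => (hR t).1) (fun t => (hR t).2.1) (fun t => (hR t).2.2.1)
      (congrArg Prod.fst hper) (congrArg Prod.snd hper) t
    exact Prod.ext h1 h2
end
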